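/- arXiv:2003.14223 — 3 statements merged into one kernel-verified Lean document; each statement's English description precedes it below -/
import Mathlib

section
/- Let a, b ∈ l_1 and C > 1 satisfy ∑_{i=k}^∞ a_i^* ≤ C · ∑_{i=max(⌊k/C⌋,1)}^∞ b_i^* for all k = 1, 2, .... Then there exists a homomorphism Q on l_1 with Qb = a such that ‖Qx‖₁ ≤ 6(⌊C⌋+1)·‖x‖₁ for all x ∈ l_1 and card(supp Qx) ≤ 9(⌊C⌋+1)·card(supp x) for all finitely supported x; in particular ‖a‖_{Orb(b; l_0, l_1)} ≤ 9(⌊C⌋+1). -/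
open scoped BigOperators ENNReal

noncomputable section

/-- `x ∈ ℓ¹`: the sequence is absolutely summable. -/
def MemL1 (x : ℕ → ℝ) : Prop := Summable fun i => |x i|

/-- `‖x‖₁ = ∑ |x i|`. -/
def l1Norm (x : ℕ → ℝ) : ℝ := ∑' i, |x i|

/-- `x ∈ ℓ⁰`: the sequence is finitely supported (eventually zero). -/
def FinSupp (x : ℕ → ℝ) : Prop := {i : ℕ | x i ≠ 0}.Finite

/-- `‖x‖₀ = card (supp x)`. -/
def suppCard (x : ℕ → ℝ) : ℕ := {i : ℕ | x i ≠ 0}.ncard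

/-- The nonincreasing rearrangement `u_k^* = inf {t ≥ 0 : card {i : |u i| > t} < k}`
(meaningful for `k ≥ 1`). -/
def rearr (u : ℕ → ℝ) (k : ℕ) : ℝ :=
  sInf {t : ℝ | 0 ≤ t ∧ {i : ℕ | t < |u i|}.Finite ∧ {i : ℕ | t < |u i|}.ncard < k}

/-- The tail sum `∑_{i=k}^∞ u_i^*` of the nonincreasing rearrangement. -/
def tailSum (u : ℕ → ℝ) (k : ℕ) : ℝ := ∑' n : ℕ, rearr u (k + n)

/-- A homomorphism of the additive group of sequences. -/
def IsHom (T : (ℕ → ℝ) → ℕ → ℝ) : Prop :=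
  (∀ x y, T (x + y) = T x + T y) ∧ ∀ x, T (-x) = -T x

/-- `T` is bounded on `ℓ¹` with constant `M`. -/
def L1BddBy (T : (ℕ → ℝ) → ℕ → ℝ) (M : ℝ) : Prop :=
  ∀ x, MemL1 x → MemL1 (T x) ∧ l1Norm (T x) ≤ M * l1Norm x

/-- `T` is bounded on `ℓ⁰` with constant `M`. -/
def L0BddBy (T : (ℕ → ℝ) → ℕ → ℝ) (M : ℝ) : Prop :=
  ∀ x, FinSupp x → FinSupp (T x) ∧ (suppCard (T x) : ℝ) ≤ M * suppCard x

/-- `a ∈ Orb (b; ℓ⁰, ℓ¹)`. -/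
def InOrbit (b a : ℕ → ℝ) : Prop :=
  ∃ T M, IsHom T ∧ L1BddBy T M ∧ L0BddBy T M ∧ T b = a

/-- The orbit quasi-norm `‖a‖_{Orb(b; ℓ⁰, ℓ¹)}`: the infimum of
`max (‖T‖_{ℓ¹→ℓ¹}, ‖T‖_{ℓ⁰→ℓ⁰})` over homomorphisms `T` with `T b = a`, expressed as the
infimum of constants `M` for which some homomorphism `T` with `T b = a` is `M`-bounded on
both `ℓ⁰` and `ℓ¹`. -/
def orbNorm (b a : ℕ → ℝ) : ℝ :=
  sInf {M : ℝ | ∃ T, IsHom T ∧ L1BddBy T M ∧ L0BddBy T M ∧ T b = a}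

/-- The approximative E-functional of the pair `(ℓ⁰, ℓ¹)`. -/
def Efun (t : ℝ) (x : ℕ → ℝ) : ℝ :=
  sInf {r : ℝ | ∃ x₀, FinSupp x₀ ∧ (suppCard x₀ : ℝ) ≤ t ∧ r = l1Norm (x - x₀)}

/-- The E-orbit quasi-norm `‖x‖_{E-Orb(b; ℓ⁰, ℓ¹)}`. -/
def eOrbNorm (b x : ℕ → ℝ) : ℝ :=
  sInf {C : ℝ | 0 < C ∧ ∀ t > 0, Efun t x ≤ C * Efun (t / C) b}

/-- Peetre's K-functional of the pair `(ℓ⁰, ℓ¹)`. -/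
def Kfun (t : ℝ) (x : ℕ → ℝ) : ℝ :=
  sInf {r : ℝ | ∃ x₀ x₁, x = x₀ + x₁ ∧ FinSupp x₀ ∧ MemL1 x₁ ∧
    r = (suppCard x₀ : ℝ) + t * l1Norm x₁}

/-- The K-orbit quasi-norm `‖x‖_{K-Orb(b; ℓ⁰, ℓ¹)} = sup_{t>0} K(t,x)/K(t,b)`, expressed as
the least constant `C ≥ 0` with `K(t,x) ≤ C·K(t,b)` for all `t > 0`. -/
def kOrbNorm (b x : ℕ → ℝ) : ℝ :=
  sInf {C : ℝ | 0 ≤ C ∧ ∀ t > 0, Kfun t x ≤ C * Kfun t b}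

/-- `X` (with quasi-norm `N`) is a rearrangement invariant sequence group. -/
def IsRIGroup (X : Set (ℕ → ℝ)) (N : (ℕ → ℝ) → ℝ) : Prop :=
  (∀ x ∈ X, 0 ≤ N x) ∧
  (∀ x ∈ X, (N x = 0 ↔ x = 0)) ∧
  (∀ x ∈ X, -x ∈ X ∧ N (-x) = N x) ∧
  (∀ x ∈ X, ∀ y ∈ X, x + y ∈ X ∧ N (x + y) ≤ N x + N y) ∧
  (∀ x y, y ∈ X → (∀ k : ℕ, 1 ≤ k → rearr x k ≤ rearr y k) → x ∈ X ∧ N x ≤ N y)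

/-- `X` is an interpolation group with respect to the pair `(ℓ⁰, ℓ¹)`: every homomorphism
bounded on both `ℓ⁰` and `ℓ¹` maps `X` into `X` and is bounded on `X`. -/
def InterpGroup (X : Set (ℕ → ℝ)) (N : (ℕ → ℝ) → ℝ) : Prop :=
  ∀ T : (ℕ → ℝ) → ℕ → ℝ, IsHom T → (∃ M, L1BddBy T M ∧ L0BddBy T M) →
    (∀ x ∈ X, T x ∈ X) ∧ ∃ M' : ℝ, 0 ≤ M' ∧ ∀ x ∈ X, N (T x) ≤ M' * N x

/-- The dilation `σ_m`: each coordinate repeated `m` times (sequences indexed from 1),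
`(σ_m b)_n = b_{⌈n/m⌉}`. -/
def sigmaDil (m : ℕ) (b : ℕ → ℝ) : ℕ → ℝ := fun n => b ((n - 1) / m + 1)

/-- The dilation `σ_{1/n}`: averages over consecutive blocks of length `n`
(sequences indexed from 1). -/
def sigmaAvg (n : ℕ) (b : ℕ → ℝ) : ℕ → ℝ :=
  fun j => (n : ℝ)⁻¹ * ∑ k ∈ Finset.Icc ((j - 1) * n + 1) (j * n), b k

end

namespace OrbitAux

open Finset

open Classical in
/-- choose an index outside `s` where `|u|` is maximal. -/
noncomputable def pick (u : ℕ → ℝ) (s : Finset ℕ) : ℕ :=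
  if h : ∃ i, i ∉ s ∧ ∀ i', i' ∉ s → |u i'| ≤ |u i| then h.choose else 0

lemma pick_exists (u : ℕ → ℝ) (hu : Summable fun i => |u i|) (s : Finset ℕ) :
    ∃ i, i ∉ s ∧ ∀ i', i' ∉ s → |u i'| ≤ |u i| := by
  by_cases hz : ∃ i, i ∉ s ∧ u i ≠ 0
  · obtain ⟨i₀, hi₀s, hi₀⟩ := hz
    have hfin : {i : ℕ | |u i₀| ≤ |u i|}.Finite := by
      have h0 : 0 < |u i₀| := abs_pos.2 hi₀
      have hev : ∀ᶠ i in Filter.cofinite, |u i| < |u i₀| :=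
        hu.tendsto_cofinite_zero.eventually (gt_mem_nhds h0)
      simpa [Filter.eventually_cofinite, not_lt] using hev
    set F : Finset ℕ := hfin.toFinset \ s with hF
    have hi₀F : i₀ ∈ F := by
      simp [hF, Set.Finite.mem_toFinset, hi₀s]
    obtain ⟨i, hiF, hmax⟩ := F.exists_max_image (fun i => |u i|) ⟨i₀, hi₀F⟩
    have his : i ∉ s := (Finset.mem_sdiff.1 hiF).2
    refine ⟨i, his, fun i' hi' => ?_⟩
    by_cases hcase : |u i₀| ≤ |u i'|
    · exact hmax i' (by simp [hF, Set.Finite.mem_toFinset, hcase, hi'])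
    · have h1 : |u i₀| ≤ |u i| := hmax i₀ hi₀F
      linarith [not_le.1 hcase]
  · push_neg at hz
    obtain ⟨i, hi⟩ := s.exists_notMem
    refine ⟨i, hi, fun i' hi' => ?_⟩
    rw [hz i' hi', hz i hi]

lemma pick_spec (u : ℕ → ℝ) (hu : Summable fun i => |u i|) (s : Finset ℕ) :
    pick u s ∉ s ∧ ∀ i', i' ∉ s → |u i'| ≤ |u (pick u s)| := by
  have h := pick_exists u hu s
  rw [pick, dif_pos h]
  exact h.choose_spec

/-- the set of the first `n` chosen indices. -/
noncomputable def prevs (u : ℕ → ℝ) : ℕ → Finset ℕ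
  | 0 => ∅
  | n + 1 => insert (pick u (prevs u n)) (prevs u n)

/-- enumeration of the support of `u` in nonincreasing order of `|u|`. -/
noncomputable def enum (u : ℕ → ℝ) (n : ℕ) : ℕ := pick u (prevs u n)

/-- `n`-th largest absolute value of `u`. -/
noncomputable def rv (u : ℕ → ℝ) (n : ℕ) : ℝ := |u (enum u n)|

lemma prevs_eq (u : ℕ → ℝ) (n : ℕ) : prevs u n = (range n).image (enum u) := by
  induction n with
  | zero => simp [prevs]
  | succ n ih =>
    rw [prevs, Finset.range_add_one, Finset.image_insert, ← ih, enum]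

lemma enum_not_mem {u : ℕ → ℝ} (hu : Summable fun i => |u i|) (n : ℕ) :
    enum u n ∉ prevs u n := (pick_spec u hu _).1

lemma enum_spec {u : ℕ → ℝ} (hu : Summable fun i => |u i|) {n : ℕ} {i : ℕ}
    (hi : i ∉ prevs u n) : |u i| ≤ rv u n :=
  (pick_spec u hu _).2 i hi

lemma enum_mem_succ {u : ℕ → ℝ} {m n : ℕ} (hmn : m < n) : enum u m ∈ prevs u n := by
  rw [prevs_eq]
  exact Finset.mem_image_of_mem _ (Finset.mem_range.2 hmn)

lemma enum_injective {u : ℕ → ℝ} (hu : Summable fun i => |u i|) :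
    Function.Injective (enum u) := by
  intro m n hmn
  by_contra hne
  rcases Nat.lt_or_ge m n with h | h
  · exact enum_not_mem hu n (hmn ▸ enum_mem_succ (u := u) h)
  · have h' : n < m := lt_of_le_of_ne h (Ne.symm hne)
    exact enum_not_mem hu m (hmn ▸ enum_mem_succ (u := u) h')

lemma rv_nonneg (u : ℕ → ℝ) (n : ℕ) : 0 ≤ rv u n := abs_nonneg _

lemma rv_antitone {u : ℕ → ℝ} (hu : Summable fun i => |u i|) : Antitone (rv u) := by
  refine antitone_nat_of_succ_le fun n => ?_
  have h1 : enum u (n+1) ∉ prevs u n := by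
    intro hmem
    exact enum_not_mem hu (n+1) (by rw [prevs]; exact Finset.mem_insert_of_mem hmem)
  exact enum_spec hu h1

lemma summable_rv {u : ℕ → ℝ} (hu : Summable fun i => |u i|) : Summable (rv u) :=
  hu.comp_injective (enum_injective hu)

lemma enum_covers {u : ℕ → ℝ} (hu : Summable fun i => |u i|) {i : ℕ} (hi : u i ≠ 0) :
    ∃ n, enum u n = i := by
  by_contra hno
  push_neg at hno
  have hnm : ∀ n, i ∉ prevs u n := by
    intro n
    rw [prevs_eq, Finset.mem_image]
    rintro ⟨m, -, hm⟩
    exact hno m hm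
  have hge : ∀ n, |u i| ≤ rv u n := fun n => enum_spec hu (hnm n)
  have h0 : 0 < |u i| := abs_pos.2 hi
  have hev : ∀ᶠ n in Filter.atTop, rv u n < |u i| :=
    (summable_rv hu).tendsto_atTop_zero.eventually (gt_mem_nhds h0)
  obtain ⟨n, hn⟩ := hev.exists
  exact absurd (hge n) (not_le.2 hn)

-- PART2: rearr/tailSum lemmas

lemma rearr_eq {u : ℕ → ℝ} (hu : Summable fun i => |u i|) (k : ℕ) :
    rearr u (k+1) = rv u k := by
  have hset : {t : ℝ | 0 ≤ t ∧ {i : ℕ | t < |u i|}.Finite ∧ {i : ℕ | t < |u i|}.ncard < k+1}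
      = Set.Ici (rv u k) := by
    ext t
    simp only [Set.mem_setOf_eq, Set.mem_Ici]
    constructor
    · rintro ⟨ht0, hfin, hcard⟩
      by_contra hlt
      push_neg at hlt
      have hsub : ↑((Finset.range (k+1)).image (enum u)) ⊆ {i : ℕ | t < |u i|} := by
        intro i hi
        simp only [Finset.coe_image, Set.mem_image, Finset.mem_coe, Finset.mem_range] at hi
        obtain ⟨n, hn, rfl⟩ := hi
        have : rv u k ≤ rv u n := rv_antitone hu (Nat.lt_succ_iff.1 hn)
        exact lt_of_lt_of_le hlt this
      have hcard2 : k+1 ≤ {i : ℕ | t < |u i|}.ncard := by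
        have h1 : ((Finset.range (k+1)).image (enum u)).card = k+1 := by
          rw [Finset.card_image_of_injective _ (enum_injective hu), Finset.card_range]
        calc k+1 = (↑((Finset.range (k+1)).image (enum u)) : Set ℕ).ncard := by
                  rw [Set.ncard_coe_finset, h1]
          _ ≤ _ := Set.ncard_le_ncard hsub hfin
      omega
    · intro hge
      have ht0 : 0 ≤ t := le_trans (rv_nonneg u k) hge
      have hsub : {i : ℕ | t < |u i|} ⊆ ↑((Finset.range k).image (enum u)) := by
        intro i hi
        simp only [Set.mem_setOf_eq] at hi
        have hne : u i ≠ 0 := by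
          intro h0
          rw [h0] at hi; simp at hi; linarith
        obtain ⟨n, rfl⟩ := enum_covers hu hne
        have hnk : n < k := by
          by_contra hge2
          push_neg at hge2
          have : rv u n ≤ rv u k := rv_antitone hu hge2
          have : rv u n ≤ t := le_trans this hge
          exact absurd hi (not_lt.2 this)
        simp only [Finset.coe_image, Set.mem_image, Finset.mem_coe, Finset.mem_range]
        exact ⟨n, hnk, rfl⟩
      have hfin : {i : ℕ | t < |u i|}.Finite :=
        Set.Finite.subset (Finset.finite_toSet _) hsub
      refine ⟨ht0, hfin, ?_⟩
      have := Set.ncard_le_ncard hsub (Finset.finite_toSet _)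
      have h2 : (↑((Finset.range k).image (enum u)) : Set ℕ).ncard ≤ k := by
        rw [Set.ncard_coe_finset]
        exact le_trans (Finset.card_image_le) (le_of_eq (Finset.card_range k))
      omega
  rw [rearr, hset, csInf_Ici]

lemma tailSum_eq {u : ℕ → ℝ} (hu : Summable fun i => |u i|) (k : ℕ) :
    tailSum u (k+1) = ∑' n, rv u (k + n) := by
  rw [tailSum]
  congr 1
  funext n
  have : k + 1 + n = (k + n) + 1 := by omega
  rw [this, rearr_eq hu]

lemma summable_rv_add {u : ℕ → ℝ} (hu : Summable fun i => |u i|) (k : ℕ) :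
    Summable fun n => rv u (k + n) := by
  have := (summable_nat_add_iff (f := rv u) k).2 (summable_rv hu)
  simpa [add_comm] using this

/-- the tail `Tb k = ∑_{n} rv (k+n)` is antitone in `k`. -/
lemma tail_antitone {u : ℕ → ℝ} (hu : Summable fun i => |u i|) :
    Antitone (fun k => ∑' n, rv u (k + n)) := by
  refine antitone_nat_of_succ_le fun k => ?_
  refine Summable.tsum_le_tsum (fun n => ?_) (summable_rv_add hu (k+1)) (summable_rv_add hu k)
  exact rv_antitone hu (by omega)

lemma tail_nonneg {u : ℕ → ℝ} (k : ℕ) : 0 ≤ ∑' n, rv u (k + n) :=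
  tsum_nonneg fun n => rv_nonneg u _

lemma le_tail {u : ℕ → ℝ} (hu : Summable fun i => |u i|) (k : ℕ) :
    rv u k ≤ ∑' n, rv u (k + n) := by
  have := Summable.le_tsum (summable_rv_add hu k) 0 (fun j _ => rv_nonneg u _)
  simpa using this

lemma tail_succ {u : ℕ → ℝ} (hu : Summable fun i => |u i|) (k : ℕ) :
    (∑' n, rv u (k + n)) = rv u k + ∑' n, rv u ((k+1) + n) := by
  have h := Summable.tsum_eq_zero_add (summable_rv_add hu k)
  rw [h]
  norm_num
  exact tsum_congr fun n => by congr 1; omega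

lemma tail_tendsto_zero {u : ℕ → ℝ} :
    Filter.Tendsto (fun k => ∑' n, rv u (k + n)) Filter.atTop (nhds 0) := by
  have := tendsto_sum_nat_add (rv u)
  convert this using 2 with k
  exact tsum_congr fun n => by congr 1; omega

-- PART 3 : abstract waterfill construction
section Waterfill

variable (A B : ℕ → ℝ) (q : ℕ)

/-- cumulative capacity before column `j`. -/
noncomputable def DD (j : ℕ) : ℝ := q * ∑ i ∈ Finset.range j, B i

/-- fill level after processing indices `< k`. -/
noncomputable def XX : ℕ → ℝ
  | 0 => 0
  | k + 1 => if B (k / q) < A k then max (XX k) (DD B q (k / q)) + A k else XX k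

/-- start level of index `k`. -/
noncomputable def yy (k : ℕ) : ℝ := max (XX A B q k) (DD B q (k / q))

/-- amount of index `k` placed in column `j`. -/
noncomputable def mass (k j : ℕ) : ℝ :=
  if B (k / q) < A k then
    max 0 (min (XX A B q (k+1)) (DD B q (j+1)) - max (yy A B q k) (DD B q j))
  else if j = k / q then A k else 0

variable {A B q}
variable (hA : Antitone A) (hA0 : ∀ k, 0 ≤ A k) (hAs : Summable A)
variable (hB : Antitone B) (hB0 : ∀ k, 0 ≤ B k) (hBs : Summable B)
variable (hq : 0 < q)

section tails

lemma tail_succ' {f : ℕ → ℝ} (hf : Summable f) (k : ℕ) :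
    (∑' n, f (k + n)) = f k + ∑' n, f ((k+1) + n) := by
  have hsk : Summable fun n => f (k + n) := by
    have := (summable_nat_add_iff (f := f) k).2 hf
    simpa [add_comm] using this
  rw [Summable.tsum_eq_zero_add hsk]
  norm_num
  exact tsum_congr fun n => by congr 1; omega

lemma summable_tail' {f : ℕ → ℝ} (hf : Summable f) (k : ℕ) :
    Summable fun n => f (k + n) := by
  have := (summable_nat_add_iff (f := f) k).2 hf
  simpa [add_comm] using this

lemma tail_antitone' {f : ℕ → ℝ} (hf : Summable f) (h0 : ∀ n, 0 ≤ f n) :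
    Antitone (fun k => ∑' n, f (k + n)) := by
  refine antitone_nat_of_succ_le fun k => ?_
  rw [tail_succ' hf k]
  have : 0 ≤ ∑' n, f ((k+1) + n) := tsum_nonneg (fun n => h0 ((k+1) + n))
  linarith [h0 k]

lemma tail_nonneg' {f : ℕ → ℝ} (h0 : ∀ n, 0 ≤ f n) (k : ℕ) :
    0 ≤ ∑' n, f (k + n) := tsum_nonneg fun n => h0 _

lemma le_tail' {f : ℕ → ℝ} (hf : Summable f) (h0 : ∀ n, 0 ≤ f n) (k : ℕ) :
    f k ≤ ∑' n, f (k + n) := by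
  have := Summable.le_tsum (summable_tail' hf k) 0 (fun j _ => h0 _)
  simpa using this

lemma tail_tendsto' (f : ℕ → ℝ) :
    Filter.Tendsto (fun k => ∑' n, f (k + n)) Filter.atTop (nhds 0) := by
  have := tendsto_sum_nat_add f
  convert this using 2 with k
  exact tsum_congr fun n => by congr 1; omega

end tails

lemma DD_zero : DD B q 0 = 0 := by simp [DD]

lemma DD_succ (j : ℕ) : DD B q (j+1) = DD B q j + q * B j := by
  simp [DD, Finset.sum_range_succ]; ring

lemma DD_mono (hB0 : ∀ k, 0 ≤ B k) : Monotone (DD B q) := by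
  refine monotone_nat_of_le_succ fun j => ?_
  rw [DD_succ]
  have : (0:ℝ) ≤ q * B j := mul_nonneg (by positivity) (hB0 j)
  linarith

lemma DD_eq (hBs : Summable B) (j : ℕ) :
    DD B q j = q * (∑' n, B n) - q * ∑' n, B (j + n) := by
  have h := Summable.sum_add_tsum_nat_add j hBs
  have h2 : (∑' n, B (n + j)) = ∑' n, B (j + n) := tsum_congr fun n => by congr 1; omega
  rw [DD, ← h, h2]; ring

lemma DD_le (hBs : Summable B) (hB0 : ∀ k, 0 ≤ B k) (j : ℕ) :
    DD B q j ≤ q * ∑' n, B n := by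
  rw [DD_eq hBs]
  have := tail_nonneg' hB0 (f := B) j
  nlinarith [Nat.cast_nonneg (α := ℝ) q]

lemma XX_nonneg (hA0 : ∀ k, 0 ≤ A k) (hB0 : ∀ k, 0 ≤ B k) : ∀ k, 0 ≤ XX A B q k := by
  intro k
  induction k with
  | zero => simp [XX]
  | succ k ih =>
    rw [XX]
    split_ifs with hbig
    · have h1 : XX A B q k ≤ max (XX A B q k) (DD B q (k / q)) := le_max_left _ _
      have := hA0 k
      linarith
    · exact ih

lemma XX_succ_big {k : ℕ} (hbig : B (k / q) < A k) :
    XX A B q (k+1) = yy A B q k + A k := by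
  rw [XX, if_pos hbig, yy]

lemma XX_succ_small {k : ℕ} (hbig : ¬ B (k / q) < A k) :
    XX A B q (k+1) = XX A B q k := by
  rw [XX, if_neg hbig]

lemma XX_le_yy (k : ℕ) : XX A B q k ≤ yy A B q k := le_max_left _ _

lemma DD_le_yy (k : ℕ) : DD B q (k / q) ≤ yy A B q k := le_max_right _ _

lemma XX_mono (hA0 : ∀ k, 0 ≤ A k) : Monotone (XX A B q) := by
  refine monotone_nat_of_le_succ fun k => ?_
  by_cases hbig : B (k / q) < A k
  · rw [XX_succ_big hbig]
    have := hA0 k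
    have := XX_le_yy (A := A) (B := B) (q := q) k
    linarith
  · rw [XX_succ_small hbig]

lemma yy_nonneg (hA0 : ∀ k, 0 ≤ A k) (hB0 : ∀ k, 0 ≤ B k) (k : ℕ) :
    0 ≤ yy A B q k := le_trans (XX_nonneg hA0 hB0 k) (XX_le_yy k)

lemma yy_le_XX_succ_big (hA0 : ∀ k, 0 ≤ A k) {k : ℕ} (hbig : B (k / q) < A k) :
    yy A B q k ≤ XX A B q (k+1) := by
  rw [XX_succ_big hbig]; linarith [hA0 k]

end Waterfill
-- PART 4 : feasibility invariant and row sums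
section Waterfill2

variable {A B : ℕ → ℝ} {q : ℕ} {c : ℝ}

/-- the feasibility invariant. -/
lemma XX_invariant
    (hA0 : ∀ k, 0 ≤ A k) (hAs : Summable A)
    (hB0 : ∀ k, 0 ≤ B k) (hBs : Summable B)
    (hc0 : 0 ≤ c) (hcq : c < q)
    (HH : ∀ k, (∑' n, A (k + n)) ≤ c * ∑' n, B (k / q + n)) :
    ∀ k, XX A B q (k+1) + (∑' n, A ((k+1) + n)) ≤ q * (∑' n, B n) ∧
      (0 < XX A B q (k+1) → XX A B q (k+1) + (∑' n, A ((k+1) + n)) < q * (∑' n, B n)) := by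
  have hTB0 : ∀ j, (0:ℝ) ≤ ∑' n, B (j + n) := fun j => tail_nonneg' hB0 j
  have hTBanti := tail_antitone' hBs hB0
  have hTAanti := tail_antitone' hAs hA0
  have hq0 : (0:ℝ) ≤ q := Nat.cast_nonneg q
  have hTBle : ∀ j, (∑' n, B (j + n)) ≤ ∑' n, B n := by
    intro j
    have := hTBanti (Nat.zero_le j)
    simpa using this
  -- key: if `big k` then the tail of `B` at `k/q` is positive
  have hpos : ∀ k, B (k / q) < A k → 0 < ∑' n, B (k / q + n) := by
    intro k hbig
    have h1 : 0 < A k := lt_of_le_of_lt (hB0 _) hbig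
    have h2 : A k ≤ ∑' n, A (k + n) := le_tail' hAs hA0 k
    have h3 := HH k
    nlinarith [hTB0 (k / q)]
  -- the bound for a fresh start at index `k`
  have hfresh : ∀ k, B (k / q) < A k →
      DD B q (k / q) + (∑' n, A (k + n)) < q * (∑' n, B n) := by
    intro k hbig
    rw [DD_eq hBs]
    have h3 := HH k
    have h4 := hpos k hbig
    nlinarith
  intro k
  induction k with
  | zero =>
    by_cases hbig : B (0 / q) < A 0
    · have hX : XX A B q 1 = yy A B q 0 + A 0 := XX_succ_big hbig
      have hyy : yy A B q 0 = DD B q (0 / q) := by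
        rw [yy]
        have h00 : XX A B q 0 = 0 := rfl
        rw [h00]
        have hDD0 : (0:ℝ) ≤ DD B q (0 / q) := by
          have := DD_mono (q := q) hB0 (Nat.zero_le (0 / q))
          simpa [DD_zero] using this
        exact max_eq_right hDD0
      have hts : (∑' n, A (0 + n)) = A 0 + ∑' n, A (1 + n) := tail_succ' hAs 0
      have hkey := hfresh 0 hbig
      rw [hX, hyy]
      constructor
      · linarith
      · intro _; linarith
    · have hX : XX A B q 1 = XX A B q 0 := XX_succ_small hbig
      have hX0 : XX A B q 0 = 0 := rfl
      constructor
      · rw [hX, hX0]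
        have h1 : (∑' n, A (1 + n)) ≤ ∑' n, A (0 + n) := hTAanti (by omega)
        have h2 : (∑' n, A (0 + n)) ≤ c * ∑' n, B (0 / q + n) := HH 0
        have h3 : c * (∑' n, B (0 / q + n)) ≤ q * (∑' n, B (0 / q + n)) := by
          nlinarith [hTB0 (0 / q)]
        have h4 : (q:ℝ) * (∑' n, B (0 / q + n)) ≤ q * ∑' n, B n := by
          nlinarith [hTBle (0 / q)]
        linarith
      · intro hlt
        rw [hX, hX0] at hlt
        exact absurd hlt (lt_irrefl 0)
  | succ k ih =>
    by_cases hbig : B ((k+1) / q) < A (k+1)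
    · have hX : XX A B q (k+2) = max (XX A B q (k+1)) (DD B q ((k+1) / q)) + A (k+1) := by
        rw [XX_succ_big hbig, yy]
      have hts : (∑' n, A ((k+1) + n)) = A (k+1) + ∑' n, A ((k+2) + n) := tail_succ' hAs (k+1)
      have hsum : A (k+1) + (∑' n, A ((k+2) + n)) = ∑' n, A ((k+1) + n) := by linarith
      rcases max_cases (XX A B q (k+1)) (DD B q ((k+1) / q)) with ⟨hmx, hge⟩ | ⟨hmx, hge⟩
      · -- continuing from the previous level
        rw [hX, hmx]
        have heq : XX A B q (k+1) + A (k+1) + (∑' n, A ((k+2) + n))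
            = XX A B q (k+1) + (∑' n, A ((k+1) + n)) := by linarith
        constructor
        · rw [heq]; exact ih.1
        · intro _
          rw [heq]
          by_cases hXpos : 0 < XX A B q (k+1)
          · exact ih.2 hXpos
          · have hX0 : XX A B q (k+1) = 0 :=
              le_antisymm (not_lt.1 hXpos) (XX_nonneg hA0 hB0 (k+1))
            rw [hX0, zero_add]
            have h2 := HH (k+1)
            have h4 := hpos (k+1) hbig
            have h5 := hTBle ((k+1) / q)
            nlinarith
      · -- fresh start at column (k+1)/q
        rw [hX, hmx]
        have hkey := hfresh (k+1) hbig
        constructor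
        · linarith
        · intro _; linarith
    · have hX : XX A B q (k+2) = XX A B q (k+1) := XX_succ_small hbig
      have h1 : (∑' n, A ((k+2) + n)) ≤ ∑' n, A ((k+1) + n) := hTAanti (by omega)
      exact ⟨by rw [hX]; linarith [ih.1], fun hlt => by rw [hX] at hlt ⊢; linarith [ih.2 hlt]⟩

/-- strict bound for big indices. -/
lemma XX_lt_of_big
    (hA0 : ∀ k, 0 ≤ A k) (hAs : Summable A)
    (hB0 : ∀ k, 0 ≤ B k) (hBs : Summable B)
    (hc0 : 0 ≤ c) (hcq : c < q)
    (HH : ∀ k, (∑' n, A (k + n)) ≤ c * ∑' n, B (k / q + n))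
    {k : ℕ} (hbig : B (k / q) < A k) :
    XX A B q (k+1) < q * (∑' n, B n) := by
  have hXpos : 0 < XX A B q (k+1) := by
    rw [XX_succ_big hbig]
    have h1 : 0 < A k := lt_of_le_of_lt (hB0 _) hbig
    have := yy_nonneg (A := A) (B := B) (q := q) hA0 hB0 k
    linarith
  have := (XX_invariant hA0 hAs hB0 hBs hc0 hcq HH k).2 hXpos
  have h2 : (0:ℝ) ≤ ∑' n, A ((k+1) + n) := tail_nonneg' hA0 (k+1)
  linarith

set_option maxHeartbeats 1000000 in
/-- the clamp identity. -/
lemma clamp_eq {dl dr y x : ℝ} (hd : dl ≤ dr) (hyx : y ≤ x) :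
    max 0 (min x dr - max y dl) =
      min (max (dr) y) x - min (max (dl) y) x := by
  simp only [max_def, min_def]
  split_ifs <;> linarith

end Waterfill2
-- PART 5 : row sums, column sums, column counts
section Waterfill3

variable (A B : ℕ → ℝ) (q : ℕ)

/-- big part of the mass. -/
noncomputable def bmass (k j : ℕ) : ℝ :=
  if B (k / q) < A k then mass A B q k j else 0

/-- small part of the mass. -/
noncomputable def smass (k j : ℕ) : ℝ :=
  if B (k / q) < A k then 0 else (if j = k / q then A k else 0)

variable {A B q} {c : ℝ}

lemma mass_eq_add (k j : ℕ) : mass A B q k j = bmass A B q k j + smass A B q k j := by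
  rw [bmass, smass]
  by_cases h : B (k / q) < A k
  · rw [if_pos h, if_pos h]; simp
  · rw [if_neg h, if_neg h, mass, if_neg h]; simp

lemma mass_nonneg (hA0 : ∀ k, 0 ≤ A k) (k j : ℕ) : 0 ≤ mass A B q k j := by
  rw [mass]
  split_ifs
  · exact le_max_left _ _
  · exact hA0 k
  · exact le_refl 0

lemma bmass_nonneg (hA0 : ∀ k, 0 ≤ A k) (k j : ℕ) : 0 ≤ bmass A B q k j := by
  rw [bmass]; split_ifs
  · exact mass_nonneg hA0 k j
  · exact le_refl 0

lemma smass_nonneg (hA0 : ∀ k, 0 ≤ A k) (k j : ℕ) : 0 ≤ smass A B q k j := by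
  rw [smass]; split_ifs <;> first | exact le_refl 0 | exact hA0 k

lemma mass_zero_of_DD_ge (hA0 : ∀ k, 0 ≤ A k) {k j : ℕ} (hbig : B (k / q) < A k)
    (hDD : XX A B q (k+1) ≤ DD B q j) : mass A B q k j = 0 := by
  rw [mass, if_pos hbig]
  have h1 : min (XX A B q (k+1)) (DD B q (j+1)) ≤ XX A B q (k+1) := min_le_left _ _
  have h2 : DD B q j ≤ max (yy A B q k) (DD B q j) := le_max_right _ _
  have : min (XX A B q (k+1)) (DD B q (j+1)) - max (yy A B q k) (DD B q j) ≤ 0 := by linarith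
  exact max_eq_left this

/-- there is a column bound for each big row. -/
lemma row_exists_J
    (hA0 : ∀ k, 0 ≤ A k) (hAs : Summable A)
    (hB0 : ∀ k, 0 ≤ B k) (hBs : Summable B)
    (hc0 : 0 ≤ c) (hcq : c < q)
    (HH : ∀ k, (∑' n, A (k + n)) ≤ c * ∑' n, B (k / q + n))
    {k : ℕ} (hbig : B (k / q) < A k) :
    ∃ J, XX A B q (k+1) < DD B q J := by
  have hlt := XX_lt_of_big hA0 hAs hB0 hBs hc0 hcq HH hbig
  have heps : 0 < q * (∑' n, B n) - XX A B q (k+1) := by linarith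
  have htt : Filter.Tendsto (fun J => (q:ℝ) * ∑' n, B (J + n)) Filter.atTop (nhds 0) := by
    have := (tail_tendsto' B).const_mul (q:ℝ)
    simpa using this
  have hev : ∀ᶠ J in Filter.atTop,
      (q:ℝ) * (∑' n, B (J + n)) < q * (∑' n, B n) - XX A B q (k+1) :=
    htt.eventually (gt_mem_nhds heps)
  obtain ⟨J, hJ⟩ := hev.exists
  refine ⟨J, ?_⟩
  rw [DD_eq hBs]
  linarith

lemma row_support_subset (hA0 : ∀ k, 0 ≤ A k) (hB0 : ∀ k, 0 ≤ B k) {k J : ℕ}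
    (hbig : B (k / q) < A k) (hJ : XX A B q (k+1) < DD B q J) :
    ∀ j, j ∉ Finset.range J → mass A B q k j = 0 := by
  intro j hj
  rw [Finset.mem_range, not_lt] at hj
  exact mass_zero_of_DD_ge hA0 hbig
    (le_trans (le_of_lt hJ) (DD_mono hB0 hj))

/-- row sums: every `A k` is fully distributed. -/
lemma row_tsum
    (hA0 : ∀ k, 0 ≤ A k) (hAs : Summable A)
    (hB0 : ∀ k, 0 ≤ B k) (hBs : Summable B)
    (hc0 : 0 ≤ c) (hcq : c < q)
    (HH : ∀ k, (∑' n, A (k + n)) ≤ c * ∑' n, B (k / q + n))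
    (k : ℕ) : ∑' j, mass A B q k j = A k := by
  by_cases hbig : B (k / q) < A k
  · obtain ⟨J, hJ⟩ := row_exists_J hA0 hAs hB0 hBs hc0 hcq HH hbig
    set cl : ℕ → ℝ := fun j => min (max (DD B q j) (yy A B q k)) (XX A B q (k+1)) with hcl
    have hmass : ∀ j, mass A B q k j = cl (j+1) - cl j := by
      intro j
      rw [mass, if_pos hbig, hcl]
      exact clamp_eq (DD_mono hB0 (Nat.le_succ j)) (yy_le_XX_succ_big hA0 hbig)
    rw [tsum_eq_sum (row_support_subset hA0 hB0 hbig hJ)]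
    have hsum : ∑ j ∈ Finset.range J, mass A B q k j
        = ∑ j ∈ Finset.range J, (cl (j+1) - cl j) := by
      exact Finset.sum_congr rfl fun j _ => hmass j
    rw [hsum, Finset.sum_range_sub]
    have hclJ : cl J = XX A B q (k+1) := by
      rw [hcl]
      have h1 : XX A B q (k+1) ≤ max (DD B q J) (yy A B q k) :=
        le_trans (le_of_lt hJ) (le_max_left _ _)
      simp only []
      exact min_eq_right h1
    have hcl0 : cl 0 = yy A B q k := by
      rw [hcl]
      simp only [DD_zero]
      rw [max_eq_right (yy_nonneg hA0 hB0 k)]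
      exact min_eq_left (yy_le_XX_succ_big hA0 hbig)
    rw [hclJ, hcl0, XX_succ_big hbig]
    ring
  · have hmass : ∀ j, mass A B q k j = if j = k / q then A k else 0 := by
      intro j; rw [mass, if_neg hbig]
    calc ∑' j, mass A B q k j = ∑' j, if j = k / q then A k else 0 := tsum_congr hmass
      _ = A k := tsum_ite_eq _ _

lemma row_support_finite
    (hA0 : ∀ k, 0 ≤ A k) (hAs : Summable A)
    (hB0 : ∀ k, 0 ≤ B k) (hBs : Summable B)
    (hc0 : 0 ≤ c) (hcq : c < q)
    (HH : ∀ k, (∑' n, A (k + n)) ≤ c * ∑' n, B (k / q + n))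
    (k : ℕ) : ∃ s : Finset ℕ, ∀ j ∉ s, mass A B q k j = 0 := by
  by_cases hbig : B (k / q) < A k
  · obtain ⟨J, hJ⟩ := row_exists_J hA0 hAs hB0 hBs hc0 hcq HH hbig
    exact ⟨Finset.range J, row_support_subset hA0 hB0 hbig hJ⟩
  · refine ⟨{k / q}, fun j hj => ?_⟩
    rw [mass, if_neg hbig, if_neg (by simpa using hj)]

set_option maxHeartbeats 1000000 in
private lemma step_ineq {d d' xn y x1 : ℝ} (hd : d ≤ d') (h1 : xn ≤ y) (h2 : y ≤ x1) :
    max 0 (min x1 d' - max y d) + max 0 (min xn d' - d) ≤ max 0 (min x1 d' - d) := by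
  simp only [max_def, min_def]
  split_ifs <;> linarith

/-- partial column sums of the big part. -/
lemma col_partial (hA0 : ∀ k, 0 ≤ A k) (hB0 : ∀ k, 0 ≤ B k) (j : ℕ) :
    ∀ n, ∑ k ∈ Finset.range n, bmass A B q k j
      ≤ max 0 (min (XX A B q n) (DD B q (j+1)) - DD B q j) := by
  intro n
  induction n with
  | zero => simp
  | succ n ih =>
    rw [Finset.sum_range_succ]
    by_cases hbig : B (n / q) < A n
    · have hb : bmass A B q n j
          = max 0 (min (XX A B q (n+1)) (DD B q (j+1)) - max (yy A B q n) (DD B q j)) := by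
        rw [bmass, if_pos hbig, mass, if_pos hbig]
      rw [hb]
      have hstep := step_ineq (d := DD B q j) (d' := DD B q (j+1))
        (xn := XX A B q n) (y := yy A B q n) (x1 := XX A B q (n+1))
        (DD_mono hB0 (Nat.le_succ j)) (XX_le_yy n) (yy_le_XX_succ_big hA0 hbig)
      linarith [ih]
    · have hb : bmass A B q n j = 0 := by rw [bmass, if_neg hbig]
      have hX : XX A B q (n+1) = XX A B q n := XX_succ_small hbig
      rw [hb, hX, add_zero]
      exact ih

end Waterfill3
-- PART 6 : column bounds
section Waterfill4

variable {A B : ℕ → ℝ} {q : ℕ} {c : ℝ}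

lemma col_bmass_bound (hA0 : ∀ k, 0 ≤ A k) (hB0 : ∀ k, 0 ≤ B k) (j : ℕ) :
    ∀ n, ∑ k ∈ Finset.range n, bmass A B q k j ≤ q * B j := by
  intro n
  refine le_trans (col_partial hA0 hB0 j n) ?_
  have hqB : DD B q (j+1) - DD B q j = q * B j := by rw [DD_succ]; ring
  have h1 : min (XX A B q n) (DD B q (j+1)) - DD B q j ≤ DD B q (j+1) - DD B q j := by
    have := min_le_right (XX A B q n) (DD B q (j+1))
    linarith
  have h2 : (0:ℝ) ≤ DD B q (j+1) - DD B q j := by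
    have := DD_mono (q := q) hB0 (Nat.le_succ j)
    linarith
  rw [← hqB]
  exact max_le h2 h1

lemma col_bmass_summable (hA0 : ∀ k, 0 ≤ A k) (hB0 : ∀ k, 0 ≤ B k) (j : ℕ) :
    Summable (fun k => bmass A B q k j) :=
  summable_of_sum_range_le (fun k => bmass_nonneg hA0 k j) (col_bmass_bound hA0 hB0 j)

lemma col_bmass_tsum_le (hA0 : ∀ k, 0 ≤ A k) (hB0 : ∀ k, 0 ≤ B k) (j : ℕ) :
    ∑' k, bmass A B q k j ≤ q * B j :=
  Real.tsum_le_of_sum_range_le (fun k => bmass_nonneg hA0 k j) (col_bmass_bound hA0 hB0 j)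

lemma smass_mem_Ico (hq : 0 < q) {k j : ℕ} (h : smass A B q k j ≠ 0) :
    k ∈ Finset.Ico (q * j) (q * j + q) := by
  rw [smass] at h
  split_ifs at h with h1 h2
  · exact absurd rfl h
  · have hj : j = k / q := h2
    have h3 : q * (k / q) ≤ k := by
      rw [mul_comm]; exact Nat.div_mul_le_self k q
    have h4 : k < q * (k / q) + q := by
      have h5 : k < (k / q + 1) * q := (Nat.div_lt_iff_lt_mul hq).1 (Nat.lt_succ_self _)
      calc k < (k / q + 1) * q := h5
        _ = q * (k / q) + q := by ring
    rw [Finset.mem_Ico, hj]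
    exact ⟨h3, h4⟩
  · exact absurd rfl h

lemma smass_le (hA0 : ∀ k, 0 ≤ A k) (hB0 : ∀ k, 0 ≤ B k) (k j : ℕ) :
    smass A B q k j ≤ B j := by
  rw [smass]
  split_ifs with h1 h2
  · exact hB0 j
  · have h3 : A k ≤ B (k / q) := not_lt.1 h1
    rw [h2]
    exact h3
  · exact hB0 j

lemma col_smass_summable (hq : 0 < q) (j : ℕ) :
    Summable (fun k => smass A B q k j) := by
  refine summable_of_ne_finset_zero (s := Finset.Ico (q * j) (q * j + q)) (fun k hk => ?_)
  by_contra hne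
  exact hk (smass_mem_Ico hq hne)

lemma col_smass_tsum_le (hA0 : ∀ k, 0 ≤ A k) (hB0 : ∀ k, 0 ≤ B k) (hq : 0 < q) (j : ℕ) :
    ∑' k, smass A B q k j ≤ q * B j := by
  rw [tsum_eq_sum (s := Finset.Ico (q * j) (q * j + q))
    (fun k hk => by by_contra hne; exact hk (smass_mem_Ico hq hne))]
  calc ∑ k ∈ Finset.Ico (q * j) (q * j + q), smass A B q k j
      ≤ ∑ _k ∈ Finset.Ico (q * j) (q * j + q), B j :=
        Finset.sum_le_sum (fun k _ => smass_le hA0 hB0 k j)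
    _ = q * B j := by
        rw [Finset.sum_const, Nat.card_Ico]
        simp [nsmul_eq_mul]

lemma col_mass_summable (hA0 : ∀ k, 0 ≤ A k) (hB0 : ∀ k, 0 ≤ B k) (hq : 0 < q) (j : ℕ) :
    Summable (fun k => mass A B q k j) := by
  have h1 : Summable (fun k => bmass A B q k j) := col_bmass_summable hA0 hB0 j
  have h2 : Summable (fun k => smass A B q k j) :=
    col_smass_summable (A := A) (B := B) (q := q) hq j
  exact (h1.add h2).congr (fun k => (mass_eq_add k j).symm)

lemma col_mass_tsum_le (hA0 : ∀ k, 0 ≤ A k) (hB0 : ∀ k, 0 ≤ B k) (hq : 0 < q) (j : ℕ) :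
    ∑' k, mass A B q k j ≤ 2 * q * B j := by
  have h1 : Summable (fun k => bmass A B q k j) := col_bmass_summable hA0 hB0 j
  have h2 : Summable (fun k => smass A B q k j) :=
    col_smass_summable (A := A) (B := B) (q := q) hq j
  have heq : ∑' k, mass A B q k j = (∑' k, bmass A B q k j) + ∑' k, smass A B q k j := by
    rw [← Summable.tsum_add h1 h2]
    exact tsum_congr fun k => mass_eq_add k j
  rw [heq]
  have h3 := col_bmass_tsum_le (A := A) (B := B) (q := q) hA0 hB0 j
  have h4 := col_smass_tsum_le (A := A) (B := B) (q := q) hA0 hB0 hq j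
  linarith

/-- facts about a big index with positive mass in column `j`. -/
lemma mass_pos_facts (hB : Antitone B) (hB0 : ∀ k, 0 ≤ B k) {k j : ℕ}
    (hbig : B (k / q) < A k) (hpos : 0 < mass A B q k j) :
    DD B q j < XX A B q (k+1) ∧ yy A B q k < DD B q (j+1) ∧ B j < A k ∧ 0 < B j := by
  rw [mass, if_pos hbig] at hpos
  have hinner : 0 < min (XX A B q (k+1)) (DD B q (j+1)) - max (yy A B q k) (DD B q j) := by
    by_contra hle
    push_neg at hle
    rw [max_eq_left hle] at hpos
    exact lt_irrefl 0 hpos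
  have h1 : DD B q j < XX A B q (k+1) := by
    have h1a := min_le_left (XX A B q (k+1)) (DD B q (j+1))
    have h1b := le_max_right (yy A B q k) (DD B q j)
    linarith
  have h2 : yy A B q k < DD B q (j+1) := by
    have h2a := min_le_right (XX A B q (k+1)) (DD B q (j+1))
    have h2b := le_max_left (yy A B q k) (DD B q j)
    linarith
  have hkq : k / q ≤ j := by
    by_contra hgt
    push_neg at hgt
    have h2c : DD B q (j+1) ≤ DD B q (k / q) := DD_mono hB0 hgt
    have h2d := DD_le_yy (A := A) (B := B) (q := q) k
    linarith
  have h3 : B j < A k := lt_of_le_of_lt (hB hkq) hbig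
  have h4 : 0 < B j := by
    have hDD : DD B q j < DD B q (j+1) := by
      have h4a := le_max_right (yy A B q k) (DD B q j)
      have h4b := min_le_right (XX A B q (k+1)) (DD B q (j+1))
      linarith
    rw [DD_succ] at hDD
    by_contra hb0
    push_neg at hb0
    have hq0 : (0:ℝ) ≤ q := Nat.cast_nonneg q
    nlinarith
  exact ⟨h1, h2, h3, h4⟩

/-- every finite set of big indices sending mass into column `j` has at most `q+1` elements. -/
lemma col_big_card_le (hA : Antitone A) (hA0 : ∀ k, 0 ≤ A k)
    (hB : Antitone B) (hB0 : ∀ k, 0 ≤ B k) (hq : 0 < q) (j : ℕ)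
    (T : Finset ℕ) (hT : ∀ k ∈ T, B (k / q) < A k ∧ mass A B q k j ≠ 0) :
    T.card ≤ q + 1 := by
  by_cases hcard : T.card ≤ 2
  · omega
  push_neg at hcard
  have hne : T.Nonempty := Finset.card_pos.1 (by omega)
  set m0 := T.min' hne with hm0
  set M0 := T.max' hne with hM0
  have hm0T : m0 ∈ T := T.min'_mem hne
  have hM0T : M0 ∈ T := T.max'_mem hne
  have hm0M0 : m0 < M0 := T.min'_lt_max'_of_card (by omega)
  set T' := (T.erase m0).erase M0 with hT'
  have hT'sub : T' ⊆ T := (Finset.erase_subset _ _).trans (Finset.erase_subset _ _)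
  have hM0T' : M0 ∈ T.erase m0 := Finset.mem_erase.2 ⟨Nat.ne_of_gt hm0M0, hM0T⟩
  have hT'card : T'.card = T.card - 2 := by
    rw [hT', Finset.card_erase_of_mem hM0T', Finset.card_erase_of_mem hm0T]
    omega
  have hm0big := (hT m0 hm0T).1
  have hm0pos : 0 < mass A B q m0 j :=
    lt_of_le_of_ne (mass_nonneg hA0 m0 j) (Ne.symm (hT m0 hm0T).2)
  have hM0big := (hT M0 hM0T).1
  have hM0pos : 0 < mass A B q M0 j :=
    lt_of_le_of_ne (mass_nonneg hA0 M0 j) (Ne.symm (hT M0 hM0T).2)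
  obtain ⟨hm1, -, -, hBj⟩ := mass_pos_facts hB hB0 hm0big hm0pos
  obtain ⟨-, hM2, -, -⟩ := mass_pos_facts hB hB0 hM0big hM0pos
  -- middles have full mass `A k`
  have hmid : ∀ k ∈ T', mass A B q k j = A k ∧ B j < A k := by
    intro k hk
    have hkT := hT'sub hk
    have hkbig := (hT k hkT).1
    have hkpos : 0 < mass A B q k j :=
      lt_of_le_of_ne (mass_nonneg hA0 k j) (Ne.symm (hT k hkT).2)
    obtain ⟨-, -, hBA, -⟩ := mass_pos_facts hB hB0 hkbig hkpos
    have hkm0 : m0 < k := by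
      have hne1 := (Finset.mem_erase.1 (Finset.mem_erase.1 hk).2).1
      exact lt_of_le_of_ne (T.min'_le k hkT) (Ne.symm hne1)
    have hkM0 : k < M0 := by
      have hne2 := (Finset.mem_erase.1 hk).1
      exact lt_of_le_of_ne (T.le_max' k hkT) hne2
    have hlow : DD B q j < yy A B q k := by
      have hx1 : XX A B q (m0+1) ≤ XX A B q k := XX_mono hA0 hkm0
      have hx2 := XX_le_yy (A := A) (B := B) (q := q) k
      linarith
    have hhigh : XX A B q (k+1) < DD B q (j+1) := by
      have hx1 : XX A B q (k+1) ≤ XX A B q M0 := XX_mono hA0 hkM0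
      have hx2 := XX_le_yy (A := A) (B := B) (q := q) M0
      linarith
    refine ⟨?_, hBA⟩
    rw [mass, if_pos hkbig, min_eq_left (le_of_lt hhigh), max_eq_left (le_of_lt hlow)]
    rw [XX_succ_big hkbig]
    have := lt_of_le_of_lt (hB0 j) hBA
    rw [max_eq_right (by linarith)]
    ring
  -- T' is nonempty
  have hT'ne : T'.Nonempty := Finset.card_pos.1 (by omega)
  -- strict mass comparison
  have hstrict : (T'.card : ℝ) * B j < ∑ k ∈ T', A k := by
    have h1 : ∑ _k ∈ T', B j < ∑ k ∈ T', A k :=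
      Finset.sum_lt_sum_of_nonempty hT'ne (fun k hk => (hmid k hk).2)
    calc (T'.card : ℝ) * B j = ∑ _k ∈ T', B j := by
          rw [Finset.sum_const, nsmul_eq_mul]
      _ < _ := h1
  have hupper : ∑ k ∈ T', A k ≤ q * B j := by
    have h1 : ∑ k ∈ T', A k = ∑ k ∈ T', bmass A B q k j := by
      refine Finset.sum_congr rfl fun k hk => ?_
      rw [bmass, if_pos (hT k (hT'sub hk)).1, (hmid k hk).1]
    rw [h1]
    refine le_trans (Summable.sum_le_tsum T' (fun k _ => bmass_nonneg hA0 k j)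
      (col_bmass_summable hA0 hB0 j)) ?_
    exact col_bmass_tsum_le (A := A) (B := B) (q := q) hA0 hB0 j
  have hcardlt : (T'.card : ℝ) < q := by
    have := lt_of_lt_of_le hstrict hupper
    exact lt_of_mul_lt_mul_right (by linarith) (le_of_lt hBj)
  have hcardlt' : T'.card < q := by exact_mod_cast hcardlt
  omega

/-- the set of big indices with nonzero mass in a column is finite with at most q+1 elements. -/
lemma col_big_finite_card (hA : Antitone A) (hA0 : ∀ k, 0 ≤ A k)
    (hB : Antitone B) (hB0 : ∀ k, 0 ≤ B k) (hq : 0 < q) (j : ℕ) :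
    {k | B (k / q) < A k ∧ mass A B q k j ≠ 0}.Finite ∧
    {k | B (k / q) < A k ∧ mass A B q k j ≠ 0}.ncard ≤ q + 1 := by
  set S := {k | B (k / q) < A k ∧ mass A B q k j ≠ 0} with hS
  have hfin : S.Finite := by
    by_contra hinf
    have hinf' : S.Infinite := hinf
    obtain ⟨T, hTsub, hTcard⟩ := hinf'.exists_subset_card_eq (q + 2)
    have := col_big_card_le hA hA0 hB hB0 hq j T (fun k hk => hTsub hk)
    omega
  refine ⟨hfin, ?_⟩
  have := col_big_card_le hA hA0 hB hB0 hq j hfin.toFinset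
    (fun k hk => (Set.Finite.mem_toFinset hfin).1 hk)
  rwa [Set.ncard_eq_toFinset_card S hfin]
  
/-- the full column support bound. -/
lemma col_count (hA : Antitone A) (hA0 : ∀ k, 0 ≤ A k)
    (hB : Antitone B) (hB0 : ∀ k, 0 ≤ B k) (hq : 0 < q) (j : ℕ) :
    {k | mass A B q k j ≠ 0}.Finite ∧ {k | mass A B q k j ≠ 0}.ncard ≤ 2 * q + 1 := by
  have hsub : {k | mass A B q k j ≠ 0} ⊆
      {k | B (k / q) < A k ∧ mass A B q k j ≠ 0} ∪ ↑(Finset.Ico (q * j) (q * j + q)) := by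
    intro k hk
    simp only [Set.mem_setOf_eq] at hk
    by_cases hbig : B (k / q) < A k
    · exact Or.inl ⟨hbig, hk⟩
    · right
      have : smass A B q k j ≠ 0 := by
        have := mass_eq_add (A := A) (B := B) (q := q) k j
        rw [bmass, if_neg hbig] at this
        intro hzero
        exact hk (by rw [this, hzero, zero_add])
      exact smass_mem_Ico hq this
  obtain ⟨hfin1, hcard1⟩ := col_big_finite_card hA hA0 hB hB0 hq j
  have hfinU : ({k | B (k / q) < A k ∧ mass A B q k j ≠ 0}
      ∪ ↑(Finset.Ico (q * j) (q * j + q)) : Set ℕ).Finite :=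
    hfin1.union (Finset.finite_toSet _)
  have hfin : {k | mass A B q k j ≠ 0}.Finite := hfinU.subset hsub
  refine ⟨hfin, ?_⟩
  refine le_trans (Set.ncard_le_ncard hsub hfinU) ?_
  refine le_trans (Set.ncard_union_le _ _) ?_
  have h2 : (↑(Finset.Ico (q * j) (q * j + q)) : Set ℕ).ncard = q := by
    rw [Set.ncard_coe_finset, Nat.card_Ico]
    omega
  omega

end Waterfill4
-- PART 7 : the operator
section Operator

/-- block length. -/
noncomputable def qc (C : ℝ) : ℕ := 3 * (⌊C⌋₊ + 1)

lemma qc_pos (C : ℝ) : 0 < qc C := by simp [qc]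

lemma lt_qc {C : ℝ} (hC : 1 < C) : C < (qc C : ℝ) := by
  have h1 : C < ⌊C⌋₊ + 1 := Nat.lt_floor_add_one C
  have h2 : ((⌊C⌋₊ : ℝ) + 1) ≤ 3 * ((⌊C⌋₊ : ℝ) + 1) := by nlinarith [Nat.cast_nonneg (α := ℝ) ⌊C⌋₊]
  calc C < (⌊C⌋₊ : ℝ) + 1 := h1
    _ ≤ 3 * ((⌊C⌋₊ : ℝ) + 1) := h2
    _ = (qc C : ℝ) := by rw [qc]; push_cast; ring

lemma key_index {C : ℝ} (hC : 1 < C) (k : ℕ) :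
    k / qc C + 1 ≤ max ⌊((k+1 : ℕ) : ℝ) / C⌋₊ 1 := by
  set q := qc C with hqdef
  by_cases hk : k < q
  · have : k / q = 0 := Nat.div_eq_of_lt hk
    rw [this]
    exact le_max_right _ _
  push_neg at hk
  refine le_trans ?_ (le_max_left _ _)
  have hC0 : (0:ℝ) < C := by linarith
  rw [Nat.le_floor_iff (by positivity)]
  rw [le_div_iff₀ hC0]
  push_cast
  have h1 : ((k / q : ℕ) : ℝ) ≤ (k : ℝ) / (q : ℝ) := Nat.cast_div_le
  have h2 : C < (q : ℝ) := lt_qc hC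
  have h3 : (q : ℝ) = 3 * ((⌊C⌋₊ : ℝ) + 1) := by rw [hqdef, qc]; push_cast; ring
  have h4 : C < (⌊C⌋₊ : ℝ) + 1 := Nat.lt_floor_add_one C
  have h5 : (q : ℝ) ≤ (k : ℝ) := by exact_mod_cast hk
  have hq0 : (0:ℝ) < (q : ℝ) := by
    have := qc_pos C
    exact_mod_cast this
  -- (↑(k/q) + 1) * C ≤ k + 1
  have h6 : ((k / q : ℕ) : ℝ) * C ≤ (k : ℝ) / 3 := by
    have hm : (0:ℝ) < (⌊C⌋₊ : ℝ) + 1 := by positivity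
    have : ((k / q : ℕ) : ℝ) * C ≤ ((k : ℝ) / (q : ℝ)) * C := by
      apply mul_le_mul_of_nonneg_right h1 (le_of_lt hC0)
    refine le_trans this ?_
    rw [h3]
    rw [div_mul_eq_mul_div, div_le_div_iff₀ (by linarith) (by norm_num)]
    have hk0 : (0:ℝ) ≤ (k:ℝ) := Nat.cast_nonneg k
    nlinarith
  have h7 : 3 * C ≤ (k : ℝ) := by
    have : 3 * C ≤ 3 * ((⌊C⌋₊ : ℝ) + 1) := by linarith
    linarith [h3 ▸ h5]
  nlinarith

end Operator
-- PART 8 : operator definition and algebraic properties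
section Operator2

variable {a b : ℕ → ℝ} {C : ℝ}

lemma HH_of (ha : MemL1 a) (hb : MemL1 b) (hC : 1 < C)
    (h : ∀ k : ℕ, 1 ≤ k → tailSum a k ≤ C * tailSum b (max ⌊(k : ℝ) / C⌋₊ 1)) :
    ∀ k, (∑' n, rv a (k + n)) ≤ C * ∑' n, rv b (k / qc C + n) := by
  intro k
  have h1 := h (k+1) (by omega)
  obtain ⟨r, hr⟩ : ∃ r, max ⌊((k+1 : ℕ) : ℝ) / C⌋₊ 1 = r + 1 :=
    ⟨max ⌊((k+1 : ℕ) : ℝ) / C⌋₊ 1 - 1, by have := le_max_right ⌊((k+1 : ℕ) : ℝ) / C⌋₊ 1; omega⟩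
  rw [tailSum_eq ha k, hr, tailSum_eq hb r] at h1
  have hkl : k / qc C ≤ r := by
    have := key_index hC k
    omega
  have hmono : (∑' n, rv b (r + n)) ≤ ∑' n, rv b (k / qc C + n) :=
    tail_antitone hb hkl
  nlinarith

/-- matrix coefficients of the operator. -/
noncomputable def wmat (a b : ℕ → ℝ) (C : ℝ) (k j : ℕ) : ℝ :=
  mass (rv a) (rv b) (qc C) k j / rv a k * a (enum a k) * (b (enum b j))⁻¹

open Classical in
/-- the interpolation operator. -/
noncomputable def Qop (a b : ℕ → ℝ) (C : ℝ) (x : ℕ → ℝ) (n : ℕ) : ℝ :=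
  if h : ∃ k, enum a k = n then ∑' j, wmat a b C h.choose j * x (enum b j) else 0

lemma wmat_eq_zero {k j : ℕ} (hm : mass (rv a) (rv b) (qc C) k j = 0) :
    wmat a b C k j = 0 := by simp [wmat, hm]

lemma mass_pos' (ha : MemL1 a) (hb : MemL1 b) {k j : ℕ}
    (hm : mass (rv a) (rv b) (qc C) k j ≠ 0) : 0 < rv a k ∧ 0 < rv b j := by
  by_cases hbig : rv b (k / qc C) < rv a k
  · have hpos : 0 < mass (rv a) (rv b) (qc C) k j :=
      lt_of_le_of_ne (mass_nonneg (rv_nonneg a) k j) (Ne.symm hm)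
    obtain ⟨-, -, h3, h4⟩ := mass_pos_facts (rv_antitone hb) (rv_nonneg b) hbig hpos
    exact ⟨lt_trans h4 h3, h4⟩
  · rw [mass, if_neg hbig] at hm
    split_ifs at hm with hj
    · have hA : 0 < rv a k := lt_of_le_of_ne (rv_nonneg a k) (Ne.symm hm)
      have hB : rv a k ≤ rv b (k / qc C) := not_lt.1 hbig
      rw [hj]
      exact ⟨hA, lt_of_lt_of_le hA hB⟩
    · exact absurd rfl hm

lemma abs_wmat (ha : MemL1 a) (hb : MemL1 b) (k j : ℕ) :
    |wmat a b C k j| = mass (rv a) (rv b) (qc C) k j / rv b j := by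
  by_cases hm : mass (rv a) (rv b) (qc C) k j = 0
  · rw [wmat_eq_zero hm, hm, abs_zero, zero_div]
  · obtain ⟨hA, hB⟩ := mass_pos' ha hb hm
    have hA' : rv a k ≠ 0 := ne_of_gt hA
    have hBv : |b (enum b j)| = rv b j := rfl
    have hAv : |a (enum a k)| = rv a k := rfl
    rw [wmat, abs_mul, abs_mul, abs_div, abs_inv, hAv, hBv,
      abs_of_nonneg (mass_nonneg (rv_nonneg a) k j), abs_of_nonneg (rv_nonneg a k),
      div_mul_cancel₀ _ hA', div_eq_mul_inv]

lemma wrow_support (ha : MemL1 a) (hb : MemL1 b) (hC : 1 < C)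
    (h : ∀ k : ℕ, 1 ≤ k → tailSum a k ≤ C * tailSum b (max ⌊(k : ℝ) / C⌋₊ 1)) (k : ℕ) :
    ∃ s : Finset ℕ, ∀ j ∉ s, wmat a b C k j = 0 := by
  obtain ⟨s, hs⟩ := row_support_finite (rv_nonneg a) (summable_rv ha)
    (rv_nonneg b) (summable_rv hb) (by linarith : (0:ℝ) ≤ C) (lt_qc hC) (HH_of ha hb hC h) k
  exact ⟨s, fun j hj => wmat_eq_zero (hs j hj)⟩

lemma wrow_summable (ha : MemL1 a) (hb : MemL1 b) (hC : 1 < C)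
    (h : ∀ k : ℕ, 1 ≤ k → tailSum a k ≤ C * tailSum b (max ⌊(k : ℝ) / C⌋₊ 1))
    (x : ℕ → ℝ) (k : ℕ) :
    Summable (fun j => wmat a b C k j * x (enum b j)) := by
  obtain ⟨s, hs⟩ := wrow_support ha hb hC h k
  exact summable_of_ne_finset_zero (s := s) (fun j hj => by rw [hs j hj, zero_mul])

lemma Qop_apply (ha : MemL1 a) (x : ℕ → ℝ) (k : ℕ) :
    Qop a b C x (enum a k) = ∑' j, wmat a b C k j * x (enum b j) := by
  have hex : ∃ k', enum a k' = enum a k := ⟨k, rfl⟩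
  rw [Qop, dif_pos hex]
  have hk : hex.choose = k := enum_injective ha hex.choose_spec
  rw [hk]

lemma Qop_isHom (ha : MemL1 a) (hb : MemL1 b) (hC : 1 < C)
    (h : ∀ k : ℕ, 1 ≤ k → tailSum a k ≤ C * tailSum b (max ⌊(k : ℝ) / C⌋₊ 1)) :
    IsHom (Qop a b C) := by
  constructor
  · intro x y
    funext n
    show Qop a b C (x + y) n = Qop a b C x n + Qop a b C y n
    by_cases hn : ∃ k, enum a k = n
    · obtain ⟨k, rfl⟩ := hn
      rw [Qop_apply ha, Qop_apply ha, Qop_apply ha,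
        ← Summable.tsum_add (wrow_summable ha hb hC h x k) (wrow_summable ha hb hC h y k)]
      exact tsum_congr fun j => by simp [Pi.add_apply]; ring
    · rw [Qop, Qop, Qop, dif_neg hn, dif_neg hn, dif_neg hn]
      norm_num
  · intro x
    funext n
    show Qop a b C (-x) n = - Qop a b C x n
    by_cases hn : ∃ k, enum a k = n
    · obtain ⟨k, rfl⟩ := hn
      rw [Qop_apply ha, Qop_apply ha, ← tsum_neg]
      exact tsum_congr fun j => by simp [Pi.neg_apply]
    · rw [Qop, Qop, dif_neg hn, dif_neg hn]
      norm_num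

lemma Qop_b (ha : MemL1 a) (hb : MemL1 b) (hC : 1 < C)
    (h : ∀ k : ℕ, 1 ≤ k → tailSum a k ≤ C * tailSum b (max ⌊(k : ℝ) / C⌋₊ 1)) :
    Qop a b C b = a := by
  funext n
  by_cases hn : ∃ k, enum a k = n
  · obtain ⟨k, rfl⟩ := hn
    rw [Qop_apply ha]
    have hterm : ∀ j, wmat a b C k j * b (enum b j)
        = mass (rv a) (rv b) (qc C) k j * (a (enum a k) / rv a k) := by
      intro j
      by_cases hm : mass (rv a) (rv b) (qc C) k j = 0
      · rw [wmat_eq_zero hm, hm, zero_mul, zero_mul]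
      · obtain ⟨hA, hB⟩ := mass_pos' ha hb hm
        have hb0 : b (enum b j) ≠ 0 := by
          intro hz
          have : rv b j = 0 := by rw [rv, hz, abs_zero]
          linarith
        rw [wmat]
        field_simp
    rw [tsum_congr hterm, tsum_mul_right,
      row_tsum (rv_nonneg a) (summable_rv ha) (rv_nonneg b) (summable_rv hb)
        (by linarith : (0:ℝ) ≤ C) (lt_qc hC) (HH_of ha hb hC h) k]
    by_cases hA : rv a k = 0
    · have : a (enum a k) = 0 := abs_eq_zero.1 hA
      rw [this, hA]
      norm_num
    · rw [mul_comm, div_mul_cancel₀ _ hA]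
  · rw [Qop, dif_neg hn]
    by_contra hne
    have : a n ≠ 0 := fun hz => hne (by rw [hz])
    obtain ⟨k, hk⟩ := enum_covers ha this
    exact hn ⟨k, hk⟩

end Operator2
-- PART 9 : the norm bounds
section Operator3

variable {a b : ℕ → ℝ} {C : ℝ}

lemma wcol_summable (ha : MemL1 a) (hb : MemL1 b) (j : ℕ) :
    Summable (fun k => |wmat a b C k j|) := by
  refine ((col_mass_summable (rv_nonneg a) (rv_nonneg b) (qc_pos C) j).mul_right
    ((rv b j)⁻¹)).congr (fun k => ?_)
  rw [abs_wmat ha hb, div_eq_mul_inv]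

lemma wcol_tsum_le (ha : MemL1 a) (hb : MemL1 b) (j : ℕ) :
    ∑' k, |wmat a b C k j| ≤ 2 * (qc C : ℝ) := by
  have h1 : ∀ k, |wmat a b C k j| = mass (rv a) (rv b) (qc C) k j * (rv b j)⁻¹ := by
    intro k
    rw [abs_wmat ha hb, div_eq_mul_inv]
  rw [tsum_congr h1, tsum_mul_right]
  by_cases hB : rv b j = 0
  · rw [hB, inv_zero, mul_zero]
    positivity
  · have hBpos : 0 < rv b j := lt_of_le_of_ne (rv_nonneg b j) (Ne.symm hB)
    have h2 := col_mass_tsum_le (rv_nonneg a) (rv_nonneg b) (qc_pos C) j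
    rw [← div_eq_mul_inv, div_le_iff₀ hBpos]
    calc ∑' k, mass (rv a) (rv b) (qc C) k j ≤ 2 * (qc C) * rv b j := h2
      _ = 2 * (qc C : ℝ) * rv b j := by norm_num

lemma ofReal_tsum_abs {f : ℕ → ℝ} (hf : Summable fun n => |f n|) :
    (∑' n, (‖f n‖₊ : ℝ≥0∞)) = ENNReal.ofReal (∑' n, |f n|) := by
  rw [ENNReal.ofReal_tsum_of_nonneg (fun n => abs_nonneg _) hf]
  exact tsum_congr fun n => (Real.enorm_eq_ofReal_abs _)

lemma Qop_L1 (ha : MemL1 a) (hb : MemL1 b) (hC : 1 < C)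
    (h : ∀ k : ℕ, 1 ≤ k → tailSum a k ≤ C * tailSum b (max ⌊(k : ℝ) / C⌋₊ 1)) :
    L1BddBy (Qop a b C) (2 * (qc C : ℝ)) := by
  intro x hx
  have hx' : Summable (fun n => |x n|) := hx
  set Q : ℕ → ℝ := Qop a b C x with hQdef
  -- Step A : reindex over the support of `a`
  have hsupp : Function.support (fun n => (‖Q n‖₊ : ℝ≥0∞)) ⊆ Set.range (enum a) := by
    intro n hn
    simp only [Function.mem_support, ne_eq] at hn
    by_contra hr
    have hne : ¬ ∃ k, enum a k = n := by
      intro ⟨k, hk⟩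
      exact hr ⟨k, hk⟩
    have : Q n = 0 := by rw [hQdef, Qop, dif_neg hne]
    rw [this] at hn
    simp at hn
  have hstepA : (∑' n, (‖Q n‖₊ : ℝ≥0∞)) = ∑' k, (‖Q (enum a k)‖₊ : ℝ≥0∞) :=
    (Function.Injective.tsum_eq (enum_injective ha) hsupp).symm
  -- Step B : rows
  have hstepB : ∀ k, (‖Q (enum a k)‖₊ : ℝ≥0∞)
      ≤ ∑' j, (‖wmat a b C k j‖₊ : ℝ≥0∞) * (‖x (enum b j)‖₊ : ℝ≥0∞) := by
    intro k
    obtain ⟨s, hs⟩ := wrow_support ha hb hC h k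
    have hrow : Q (enum a k) = ∑ j ∈ s, wmat a b C k j * x (enum b j) := by
      rw [hQdef, Qop_apply ha]
      exact tsum_eq_sum (fun j hj => by rw [hs j hj, zero_mul])
    rw [hrow]
    calc (‖∑ j ∈ s, wmat a b C k j * x (enum b j)‖₊ : ℝ≥0∞)
        ≤ ∑ j ∈ s, (‖wmat a b C k j * x (enum b j)‖₊ : ℝ≥0∞) := by
          rw [← ENNReal.coe_finset_sum]
          exact ENNReal.coe_le_coe.2 (nnnorm_sum_le s _)
      _ = ∑ j ∈ s, (‖wmat a b C k j‖₊ : ℝ≥0∞) * (‖x (enum b j)‖₊ : ℝ≥0∞) :=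
          Finset.sum_congr rfl fun j _ => by rw [nnnorm_mul, ENNReal.coe_mul]
      _ ≤ _ := ENNReal.sum_le_tsum s
  -- Step D : columns
  have hstepD : ∀ j, (∑' k, (‖wmat a b C k j‖₊ : ℝ≥0∞))
      ≤ ENNReal.ofReal (2 * (qc C : ℝ)) := by
    intro j
    rw [ofReal_tsum_abs (wcol_summable ha hb j)]
    exact ENNReal.ofReal_le_ofReal (wcol_tsum_le ha hb j)
  -- the chain
  have key : (∑' n, (‖Q n‖₊ : ℝ≥0∞))
      ≤ ENNReal.ofReal (2 * (qc C : ℝ)) * ENNReal.ofReal (l1Norm x) := by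
    rw [hstepA]
    calc (∑' k, (‖Q (enum a k)‖₊ : ℝ≥0∞))
        ≤ ∑' k, ∑' j, (‖wmat a b C k j‖₊ : ℝ≥0∞) * (‖x (enum b j)‖₊ : ℝ≥0∞) :=
          Summable.tsum_le_tsum hstepB ENNReal.summable ENNReal.summable
      _ = ∑' j, ∑' k, (‖wmat a b C k j‖₊ : ℝ≥0∞) * (‖x (enum b j)‖₊ : ℝ≥0∞) :=
          ENNReal.tsum_comm
      _ = ∑' j, (∑' k, (‖wmat a b C k j‖₊ : ℝ≥0∞)) * (‖x (enum b j)‖₊ : ℝ≥0∞) :=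
          tsum_congr fun j => ENNReal.tsum_mul_right
      _ ≤ ∑' j, ENNReal.ofReal (2 * (qc C : ℝ)) * (‖x (enum b j)‖₊ : ℝ≥0∞) :=
          Summable.tsum_le_tsum (fun j => mul_le_mul_left (hstepD j) _)
            ENNReal.summable ENNReal.summable
      _ = ENNReal.ofReal (2 * (qc C : ℝ)) * ∑' j, (‖x (enum b j)‖₊ : ℝ≥0∞) :=
          ENNReal.tsum_mul_left
      _ ≤ ENNReal.ofReal (2 * (qc C : ℝ)) * ∑' n, (‖x n‖₊ : ℝ≥0∞) :=
          mul_le_mul_right (ENNReal.tsum_comp_le_tsum_of_injective (enum_injective hb) _) _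
      _ = ENNReal.ofReal (2 * (qc C : ℝ)) * ENNReal.ofReal (l1Norm x) := by
          rw [ofReal_tsum_abs hx']
          rfl
  -- conclude summability
  have hmul_ne : ENNReal.ofReal (2 * (qc C : ℝ)) * ENNReal.ofReal (l1Norm x) ≠ ⊤ :=
    ENNReal.mul_ne_top ENNReal.ofReal_ne_top ENNReal.ofReal_ne_top
  have hfin : (∑' n, (‖Q n‖₊ : ℝ≥0∞)) ≠ ⊤ := ne_top_of_le_ne_top hmul_ne key
  have hsumQ : Summable (fun n => ‖Q n‖₊) := ENNReal.tsum_coe_ne_top_iff_summable.1 hfin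
  have hmem : MemL1 Q := by
    have := NNReal.summable_coe.2 hsumQ
    refine this.congr (fun n => ?_)
    rw [coe_nnnorm, Real.norm_eq_abs]
  refine ⟨hmem, ?_⟩
  -- translate back to reals
  have heq : (∑' n, (‖Q n‖₊ : ℝ≥0∞)) = ENNReal.ofReal (l1Norm Q) := ofReal_tsum_abs hmem
  have h2q : (0:ℝ) ≤ 2 * (qc C : ℝ) := by positivity
  have hl1x : 0 ≤ l1Norm x := tsum_nonneg fun n => abs_nonneg _
  have hl1Q : 0 ≤ l1Norm Q := tsum_nonneg fun n => abs_nonneg _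
  have h3 := (ENNReal.toReal_le_toReal hfin hmul_ne).2 key
  rw [heq, ENNReal.toReal_ofReal hl1Q, ENNReal.toReal_mul, ENNReal.toReal_ofReal h2q,
    ENNReal.toReal_ofReal hl1x] at h3
  exact h3

end Operator3
-- PART 10 : the ℓ⁰ bound
section Operator4

variable {a b : ℕ → ℝ} {C : ℝ}

lemma Qop_L0 (ha : MemL1 a) (hb : MemL1 b) (hC : 1 < C)
    (h : ∀ k : ℕ, 1 ≤ k → tailSum a k ≤ C * tailSum b (max ⌊(k : ℝ) / C⌋₊ 1)) :
    L0BddBy (Qop a b C) (2 * (qc C : ℝ) + 1) := by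
  intro x hx
  set colS : ℕ → Set ℕ := fun j => {k | mass (rv a) (rv b) (qc C) k j ≠ 0} with hcolS
  have hcol : ∀ j, (colS j).Finite ∧ (colS j).ncard ≤ 2 * qc C + 1 := fun j =>
    col_count (rv_antitone ha) (rv_nonneg a) (rv_antitone hb) (rv_nonneg b) (qc_pos C) j
  set Jx : Set ℕ := {j | x (enum b j) ≠ 0} with hJxdef
  have hJx : Jx.Finite := by
    have heq : Jx = enum b ⁻¹' {i | x i ≠ 0} := rfl
    rw [heq]
    exact Set.Finite.preimage (Set.injOn_of_injective (enum_injective hb)) hx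
  have hU : (⋃ j ∈ Jx, colS j).Finite := hJx.biUnion (fun j _ => (hcol j).1)
  have hsub : {n | Qop a b C x n ≠ 0} ⊆ enum a '' (⋃ j ∈ Jx, colS j) := by
    intro n hn
    simp only [Set.mem_setOf_eq] at hn
    have hex : ∃ k, enum a k = n := by
      by_contra hne
      exact hn (by rw [Qop, dif_neg hne])
    obtain ⟨k, rfl⟩ := hex
    rw [Qop_apply ha] at hn
    have hexj : ∃ j, wmat a b C k j * x (enum b j) ≠ 0 := by
      by_contra hall
      push_neg at hall
      refine hn ?_
      have hz : (fun j => wmat a b C k j * x (enum b j)) = fun _ => (0:ℝ) := funext hall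
      rw [hz, tsum_zero]
    obtain ⟨j, hj⟩ := hexj
    have hw : wmat a b C k j ≠ 0 := fun hz => hj (by rw [hz, zero_mul])
    have hxj : x (enum b j) ≠ 0 := fun hz => hj (by rw [hz, mul_zero])
    have hmassne : mass (rv a) (rv b) (qc C) k j ≠ 0 := fun hz => hw (wmat_eq_zero hz)
    exact Set.mem_image_of_mem _ (Set.mem_biUnion hxj hmassne)
  have hfinsupp : FinSupp (Qop a b C x) := Set.Finite.subset (hU.image _) hsub
  refine ⟨hfinsupp, ?_⟩
  -- cardinality computation via Finsets
  have hcard1 : suppCard (Qop a b C x) ≤ (⋃ j ∈ Jx, colS j).ncard := by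
    calc suppCard (Qop a b C x) ≤ (enum a '' (⋃ j ∈ Jx, colS j)).ncard :=
          Set.ncard_le_ncard hsub (hU.image _)
      _ = (⋃ j ∈ Jx, colS j).ncard := Set.ncard_image_of_injective _ (enum_injective ha)
  have hcard2 : (⋃ j ∈ Jx, colS j).ncard ≤ (2 * qc C + 1) * Jx.ncard := by
    have hUeq : (⋃ j ∈ Jx, colS j) =
        ↑(hJx.toFinset.biUnion (fun j => ((hcol j).1).toFinset)) := by
      ext k
      simp only [Finset.coe_biUnion, Set.mem_iUnion, Finset.mem_coe,
        Finset.mem_biUnion, Set.Finite.mem_toFinset]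
    rw [hUeq, Set.ncard_coe_finset]
    calc (hJx.toFinset.biUnion (fun j => ((hcol j).1).toFinset)).card
        ≤ ∑ j ∈ hJx.toFinset, ((hcol j).1).toFinset.card := Finset.card_biUnion_le
      _ ≤ ∑ _j ∈ hJx.toFinset, (2 * qc C + 1) := by
          refine Finset.sum_le_sum fun j _ => ?_
          have := (hcol j).2
          rwa [Set.ncard_eq_toFinset_card _ (hcol j).1] at this
      _ = hJx.toFinset.card * (2 * qc C + 1) := by
          rw [Finset.sum_const, smul_eq_mul]
      _ = (2 * qc C + 1) * Jx.ncard := by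
          rw [Set.ncard_eq_toFinset_card _ hJx]
          ring
  have hcard3 : Jx.ncard ≤ suppCard x := by
    calc Jx.ncard = (enum b '' Jx).ncard :=
          (Set.ncard_image_of_injective _ (enum_injective hb)).symm
      _ ≤ suppCard x := by
          refine Set.ncard_le_ncard ?_ hx
          rintro i ⟨j, hj, rfl⟩
          exact hj
  have hq0 : (0:ℝ) ≤ (qc C : ℝ) := Nat.cast_nonneg _
  have : suppCard (Qop a b C x) ≤ (2 * qc C + 1) * suppCard x := by
    calc suppCard (Qop a b C x) ≤ (2 * qc C + 1) * Jx.ncard := le_trans hcard1 hcard2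
      _ ≤ (2 * qc C + 1) * suppCard x := Nat.mul_le_mul_left _ hcard3
  calc (suppCard (Qop a b C x) : ℝ) ≤ ((2 * qc C + 1) * suppCard x : ℕ) := by
        exact_mod_cast this
    _ = (2 * (qc C : ℝ) + 1) * suppCard x := by push_cast; ring

end Operator4
end OrbitAux

open OrbitAux in
/-- if `a, b ∈ ℓ¹`, `C > 1` and
`∑_{i=k}^∞ a_i^* ≤ C·∑_{i=max(⌊k/C⌋,1)}^∞ b_i^*` for all `k ≥ 1`, then there is a
homomorphism `Q` with `Q b = a`, bounded by `6(⌊C⌋+1)` on `ℓ¹` and by `9(⌊C⌋+1)` on `ℓ⁰`;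
in particular `‖a‖_{Orb(b;ℓ⁰,ℓ¹)} ≤ 9(⌊C⌋+1)`. -/
theorem orbit_bound_of_tail_estimate_of_one_lt (a b : ℕ → ℝ) (ha : MemL1 a) (hb : MemL1 b)
    (C : ℝ) (hC : 1 < C)
    (h : ∀ k : ℕ, 1 ≤ k → tailSum a k ≤ C * tailSum b (max ⌊(k : ℝ) / C⌋₊ 1)) :
    ∃ Q : (ℕ → ℝ) → ℕ → ℝ, IsHom Q ∧ Q b = a ∧
      L1BddBy Q (6 * ((⌊C⌋₊ : ℝ) + 1)) ∧ L0BddBy Q (9 * ((⌊C⌋₊ : ℝ) + 1)) ∧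
      orbNorm b a ≤ 9 * ((⌊C⌋₊ : ℝ) + 1) := by
  have hQhom := Qop_isHom ha hb hC h
  have hQb := Qop_b ha hb hC h
  have hL1 := Qop_L1 ha hb hC h
  have hL0 := Qop_L0 ha hb hC h
  have hfl0 : (0:ℝ) ≤ (⌊C⌋₊ : ℝ) := Nat.cast_nonneg _
  have hcast1 : 2 * (qc C : ℝ) = 6 * ((⌊C⌋₊ : ℝ) + 1) := by
    rw [qc]; push_cast; ring
  have hcast2 : 2 * (qc C : ℝ) + 1 ≤ 9 * ((⌊C⌋₊ : ℝ) + 1) := by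
    rw [qc]; push_cast; nlinarith
  have hL1' : L1BddBy (Qop a b C) (6 * ((⌊C⌋₊ : ℝ) + 1)) := by
    rw [← hcast1]; exact hL1
  have hL0' : L0BddBy (Qop a b C) (9 * ((⌊C⌋₊ : ℝ) + 1)) := by
    intro x hx
    obtain ⟨h1, h2⟩ := hL0 x hx
    refine ⟨h1, le_trans h2 ?_⟩
    have hs0 : (0:ℝ) ≤ (suppCard x : ℝ) := Nat.cast_nonneg _
    nlinarith
  have hL1'' : L1BddBy (Qop a b C) (9 * ((⌊C⌋₊ : ℝ) + 1)) := by
    intro x hx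
    obtain ⟨h1, h2⟩ := hL1' x hx
    refine ⟨h1, le_trans h2 ?_⟩
    have hl1 : 0 ≤ l1Norm x := tsum_nonneg fun n => abs_nonneg _
    nlinarith
  refine ⟨Qop a b C, hQhom, hQb, hL1', hL0', ?_⟩
  have hmem : (9 * ((⌊C⌋₊ : ℝ) + 1)) ∈
      {M : ℝ | ∃ T, IsHom T ∧ L1BddBy T M ∧ L0BddBy T M ∧ T b = a} :=
    ⟨Qop a b C, hQhom, hL1'', hL0', hQb⟩
  have hbdd : BddBelow {M : ℝ | ∃ T, IsHom T ∧ L1BddBy T M ∧ L0BddBy T M ∧ T b = a} := by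
    refine ⟨0, fun M hM => ?_⟩
    obtain ⟨T, _hThom, hTL1, _hTL0, _hTb⟩ := hM
    set e0 : ℕ → ℝ := fun i => if i = 0 then 1 else 0 with he0def
    have he0 : MemL1 e0 := by
      refine summable_of_ne_finset_zero (s := {0}) (fun i hi => ?_)
      have : i ≠ 0 := by simpa using hi
      simp [he0def, this]
    have hl1e0 : l1Norm e0 = 1 := by
      rw [l1Norm]
      have habs : ∀ i, |e0 i| = if i = 0 then (1:ℝ) else 0 := by
        intro i
        by_cases hi : i = 0 <;> simp [he0def, hi]
      rw [tsum_congr habs, tsum_ite_eq]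
    obtain ⟨-, hle⟩ := hTL1 e0 he0
    have h0 : 0 ≤ l1Norm (T e0) := tsum_nonneg fun n => abs_nonneg _
    rw [hl1e0, mul_one] at hle
    linarith
  exact csInf_le hbdd hmem
end

section
/- (Proposition 1.) Let b ∈ l_1 and suppose a ∈ Orb(b; l_0, l_1), and set C := ‖a‖_{Orb(b; l_0, l_1)} > 0. Then for all k = 1, 2, ..., one has ∑_{i=k}^∞ a_i^* ≤ C · ∑_{i=max(⌊k/C⌋,1)}^∞ b_i^*. -/
open scoped BigOperators ENNReal

namespace TP

def defSet (u : ℕ → ℝ) (k : ℕ) : Set ℝ :=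
  {t : ℝ | 0 ≤ t ∧ {i : ℕ | t < |u i|}.Finite ∧ {i : ℕ | t < |u i|}.ncard < k}

lemma rearr_eq (u : ℕ → ℝ) (k : ℕ) : rearr u k = sInf (defSet u k) := rfl

lemma bddBelow_defSet (u : ℕ → ℝ) (k : ℕ) : BddBelow (defSet u k) :=
  ⟨0, fun _ ht => ht.1⟩

lemma finite_gt {u : ℕ → ℝ} (hu : Summable fun i => |u i|) {t : ℝ} (ht : 0 < t) :
    {i : ℕ | t < |u i|}.Finite := by
  have h2 : ∀ᶠ i in Filter.cofinite, |u i| < t :=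
    hu.tendsto_cofinite_zero.eventually (gt_mem_nhds ht)
  exact (Filter.eventually_cofinite.mp h2).subset fun i hi => not_lt.mpr hi.le

lemma abs_le_l1Norm {u : ℕ → ℝ} (hu : Summable fun i => |u i|) (i : ℕ) :
    |u i| ≤ l1Norm u := Summable.le_tsum hu i fun j _ => abs_nonneg _

lemma l1Norm_nonneg (u : ℕ → ℝ) : 0 ≤ l1Norm u := tsum_nonneg fun _ => abs_nonneg _

lemma mem_defSet_l1Norm {u : ℕ → ℝ} (hu : Summable fun i => |u i|) {k : ℕ} (hk : 1 ≤ k) :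
    l1Norm u ∈ defSet u k := by
  have he : {i : ℕ | l1Norm u < |u i|} = ∅ := by
    ext i; simp only [Set.mem_setOf_eq, Set.mem_empty_iff_false, iff_false, not_lt]
    exact abs_le_l1Norm hu i
  refine ⟨l1Norm_nonneg u, ?_, ?_⟩ <;> rw [he]
  · exact Set.finite_empty
  · simpa using Nat.lt_of_lt_of_le Nat.zero_lt_one hk

lemma defSet_nonempty {u : ℕ → ℝ} (hu : Summable fun i => |u i|) {k : ℕ} (hk : 1 ≤ k) :
    (defSet u k).Nonempty := ⟨_, mem_defSet_l1Norm hu hk⟩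

lemma rearr_nonneg (u : ℕ → ℝ) (k : ℕ) : 0 ≤ rearr u k :=
  Real.sInf_nonneg fun _ ht => ht.1

lemma rearr_le {u : ℕ → ℝ} {t : ℝ} {k : ℕ} (h : t ∈ defSet u k) : rearr u k ≤ t :=
  csInf_le (bddBelow_defSet u k) h

lemma rearr_anti {u : ℕ → ℝ} (hu : Summable fun i => |u i|) {k k' : ℕ}
    (hk : 1 ≤ k) (h : k ≤ k') : rearr u k' ≤ rearr u k :=
  csInf_le_csInf (bddBelow_defSet u k') (defSet_nonempty hu hk)
    (fun t ht => ⟨ht.1, ht.2.1, lt_of_lt_of_le ht.2.2 h⟩)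

lemma le_rearr_one {u : ℕ → ℝ} (hu : Summable fun i => |u i|) (i : ℕ) :
    |u i| ≤ rearr u 1 := by
  refine le_csInf (defSet_nonempty hu le_rfl) fun t ht => ?_
  obtain ⟨h0, hf, hc⟩ := ht
  have he : {i : ℕ | t < |u i|} = ∅ := (Set.ncard_eq_zero hf).mp (by omega)
  by_contra h
  exact absurd (he ▸ (Set.mem_setOf_eq ▸ not_le.mp h) : i ∈ ({} : Set ℕ)) (by simp)

lemma exists_argmax {u : ℕ → ℝ} (hu : Summable fun i => |u i|) (hr : 0 < rearr u 1) :
    ∃ i, rearr u 1 ≤ |u i| := by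
  by_contra h
  push_neg at h
  set r := rearr u 1 with hrdef
  have hA : {i : ℕ | r / 2 < |u i|}.Finite := finite_gt hu (by linarith)
  set F := hA.toFinset with hF
  set G : Finset ℝ := insert (r / 2) (F.image fun i => |u i|) with hG
  have hGne : G.Nonempty := ⟨r / 2, Finset.mem_insert_self _ _⟩
  set t := G.max' hGne with htdef
  have htr2 : r / 2 ≤ t := Finset.le_max' G _ (Finset.mem_insert_self _ _)
  have htlt : t < r := by
    have := G.max'_mem hGne
    rw [← htdef] at this
    rcases Finset.mem_insert.mp this with h1 | h1
    · rw [h1]; linarith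
    · obtain ⟨i, _, hi2⟩ := Finset.mem_image.mp h1
      rw [← hi2]; exact h i
  have hmem : t ∈ defSet u 1 := by
    have he : {i : ℕ | t < |u i|} = ∅ := by
      ext i
      simp only [Set.mem_setOf_eq, Set.mem_empty_iff_false, iff_false, not_lt]
      by_contra hti
      push_neg at hti
      have hiA : i ∈ F := by
        rw [hF, Set.Finite.mem_toFinset]; exact lt_of_le_of_lt htr2 hti
      have : |u i| ∈ G := Finset.mem_insert_of_mem (Finset.mem_image_of_mem _ hiA)
      exact absurd (Finset.le_max' G _ this) (not_le.mpr hti)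
    refine ⟨by linarith, ?_, ?_⟩ <;> rw [he]
    · exact Set.finite_empty
    · simp
  exact absurd (rearr_le hmem) (not_le.mpr (hrdef ▸ htlt))

end TP

namespace TP

lemma summable_update {u : ℕ → ℝ} (hu : Summable fun i => |u i|) (i₀ : ℕ) :
    Summable fun i => |Function.update u i₀ 0 i| := by
  refine Summable.of_nonneg_of_le (fun _ => abs_nonneg _) (fun i => ?_) hu
  by_cases h : i = i₀ <;> simp [h, Function.update]

lemma abs_update (u : ℕ → ℝ) (i₀ i : ℕ) :
    |Function.update u i₀ 0 i| = if i = i₀ then 0 else |u i| := by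
  by_cases h : i = i₀ <;> simp [h, Function.update]

lemma l1Norm_update {u : ℕ → ℝ} (hu : Summable fun i => |u i|) (i₀ : ℕ) :
    l1Norm (Function.update u i₀ 0) = l1Norm u - |u i₀| := by
  have h := Summable.tsum_eq_add_tsum_ite hu i₀
  have h2 : (∑' i, |Function.update u i₀ 0 i|) = ∑' i, ite (i = i₀) 0 |u i| :=
    tsum_congr fun i => abs_update u i₀ i
  unfold l1Norm
  rw [h2]
  linarith [h]

/-- shift down: zeroing out an argmax coordinate shifts the rearrangement up by one. -/
lemma rearr_update_le {u : ℕ → ℝ} (hu : Summable fun i => |u i|) {i₀ : ℕ}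
    (hmax : ∀ j, |u j| ≤ |u i₀|) {n : ℕ} (hn : 1 ≤ n) :
    rearr (Function.update u i₀ 0) n ≤ rearr u (n + 1) := by
  rw [rearr_eq, rearr_eq]
  refine csInf_le_csInf (bddBelow_defSet _ n) (defSet_nonempty hu (by omega)) ?_
  rintro t ⟨h0, hf, hc⟩
  set w := Function.update u i₀ 0 with hw
  have hsub : {i : ℕ | t < |w i|} ⊆ {i : ℕ | t < |u i|} \ {i₀} := by
    intro i hi
    simp only [Set.mem_setOf_eq] at hi
    have hne : i ≠ i₀ := by
      intro h; rw [h] at hi; rw [hw] at hi; simp at hi; linarith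
    refine ⟨?_, hne⟩
    rwa [Set.mem_setOf_eq, ← show w i = u i by rw [hw]; simp [Function.update, hne]]
  refine ⟨h0, hf.diff.subset hsub, ?_⟩
  rcases Set.eq_empty_or_nonempty {i : ℕ | t < |u i|} with he | ⟨j, hj⟩
  · have : {i : ℕ | t < |w i|} = ∅ :=
      Set.subset_empty_iff.mp (hsub.trans (by rw [he]; simp))
    rw [this]; simpa using Nat.lt_of_lt_of_le Nat.zero_lt_one hn
  · have hi₀ : i₀ ∈ {i : ℕ | t < |u i|} := Set.mem_setOf_eq ▸ lt_of_lt_of_le hj (hmax j)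
    have h1 : ({i : ℕ | t < |u i|} \ {i₀}).ncard < {i : ℕ | t < |u i|}.ncard :=
      Set.ncard_diff_singleton_lt_of_mem hi₀ hf
    have h2 : {i : ℕ | t < |w i|}.ncard ≤ ({i : ℕ | t < |u i|} \ {i₀}).ncard :=
      Set.ncard_le_ncard hsub hf.diff
    omega

/-- shift up: if `w` agrees with `u` outside a set of `≤ m` coordinates, then
`u^*_{n+m} ≤ w^*_n`. -/
lemma rearr_le_of_agree {u w : ℕ → ℝ} (hw : Summable fun i => |w i|) {S : Set ℕ}
    (hS : S.Finite) (hagree : ∀ i ∉ S, w i = u i) {n m : ℕ} (hn : 1 ≤ n)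
    (hm : S.ncard ≤ m) : rearr u (n + m) ≤ rearr w n := by
  rw [rearr_eq, rearr_eq]
  refine csInf_le_csInf (bddBelow_defSet _ _) (defSet_nonempty hw hn) ?_
  rintro t ⟨h0, hf, hc⟩
  have hsub : {i : ℕ | t < |u i|} ⊆ {i : ℕ | t < |w i|} ∪ S := by
    intro i hi
    by_cases h : i ∈ S
    · exact Set.mem_union_right _ h
    · exact Set.mem_union_left _ (by rw [Set.mem_setOf_eq, hagree i h]; exact hi)
  have hfu : {i : ℕ | t < |u i|}.Finite := (hf.union hS).subset hsub
  refine ⟨h0, hfu, ?_⟩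
  have h1 : {i : ℕ | t < |u i|}.ncard ≤ ({i : ℕ | t < |w i|} ∪ S).ncard :=
    Set.ncard_le_ncard hsub (hf.union hS)
  have h2 : ({i : ℕ | t < |w i|} ∪ S).ncard ≤ {i : ℕ | t < |w i|}.ncard + S.ncard :=
    Set.ncard_union_le _ _
  omega

/-- finite sums of `|u|` are bounded by partial sums of the rearrangement. -/
lemma sum_abs_le_sum_rearr : ∀ N : ℕ, ∀ u : ℕ → ℝ, (Summable fun i => |u i|) →
    ∀ F : Finset ℕ, F.card ≤ N →
    ∑ i ∈ F, |u i| ≤ ∑ n ∈ Finset.range N, rearr u (1 + n) := by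
  intro N
  induction N with
  | zero =>
    intro u _ F hF
    rw [Finset.card_eq_zero.mp (Nat.le_zero.mp hF)]
    simp
  | succ N ih =>
    intro u hu F hF
    rcases (rearr_nonneg u 1).eq_or_lt with hr | hr
    · have hz : ∀ i, |u i| = 0 := fun i =>
        le_antisymm (le_of_le_of_eq (le_rearr_one hu i) hr.symm) (abs_nonneg _)
      calc ∑ i ∈ F, |u i| = 0 := Finset.sum_eq_zero fun i _ => hz i
        _ ≤ _ := Finset.sum_nonneg fun n _ => rearr_nonneg u _
    rcases Finset.eq_empty_or_nonempty F with hFe | hFne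
    · rw [hFe]; simpa using Finset.sum_nonneg fun n (_ : n ∈ Finset.range (N+1)) => rearr_nonneg u (1 + n)
    obtain ⟨i₀, hi₀⟩ := exists_argmax hu hr
    have hmax : ∀ j, |u j| ≤ |u i₀| := fun j => (le_rearr_one hu j).trans hi₀
    set w := Function.update u i₀ 0 with hwdef
    have hwsum : Summable fun i => |w i| := summable_update hu i₀
    obtain ⟨j, hjF, hj₀⟩ : ∃ j ∈ F, i₀ ∉ F.erase j := by
      by_cases h : i₀ ∈ F
      · exact ⟨i₀, h, Finset.notMem_erase _ _⟩
      · exact ⟨hFne.choose, hFne.choose_spec, fun hc => h (Finset.mem_of_mem_erase hc)⟩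
    have hsplit : ∑ i ∈ F, |u i| = |u j| + ∑ i ∈ F.erase j, |u i| :=
      (Finset.add_sum_erase F _ hjF).symm
    have hagree : ∑ i ∈ F.erase j, |u i| = ∑ i ∈ F.erase j, |w i| := by
      refine Finset.sum_congr rfl fun i hi => ?_
      have : i ≠ i₀ := fun h => hj₀ (h ▸ hi)
      rw [hwdef]; simp [Function.update, this]
    have hcard : (F.erase j).card ≤ N := by
      have := Finset.card_erase_of_mem hjF; omega
    have hIH : ∑ i ∈ F.erase j, |w i| ≤ ∑ n ∈ Finset.range N, rearr w (1 + n) :=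
      ih w hwsum _ hcard
    have hshift : ∑ n ∈ Finset.range N, rearr w (1 + n)
        ≤ ∑ n ∈ Finset.range N, rearr u (1 + (n + 1)) := by
      refine Finset.sum_le_sum fun n _ => ?_
      have := rearr_update_le hu hmax (n := 1 + n) (by omega)
      rwa [show 1 + n + 1 = 1 + (n + 1) by omega] at this
    have hlast : ∑ n ∈ Finset.range (N + 1), rearr u (1 + n)
        = (∑ n ∈ Finset.range N, rearr u (1 + (n + 1))) + rearr u (1 + 0) :=
      Finset.sum_range_succ' _ _
    have hj1 : |u j| ≤ rearr u 1 := le_rearr_one hu j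
    rw [hsplit, hagree, hlast]
    simp only [Nat.add_zero]
    linarith

/-- partial sums of the rearrangement are bounded by the `ℓ¹` norm. -/
lemma sum_rearr_le_l1Norm : ∀ N : ℕ, ∀ u : ℕ → ℝ, (Summable fun i => |u i|) →
    ∑ n ∈ Finset.range N, rearr u (1 + n) ≤ l1Norm u := by
  intro N
  induction N with
  | zero => intro u _; simpa using l1Norm_nonneg u
  | succ N ih =>
    intro u hu
    rcases (rearr_nonneg u 1).eq_or_lt with hr | hr
    · have hz : ∀ n, rearr u (1 + n) = 0 := fun n =>
        le_antisymm (le_of_le_of_eq (rearr_anti hu le_rfl (by omega)) hr.symm)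
          (rearr_nonneg u _)
      calc ∑ n ∈ Finset.range (N+1), rearr u (1+n) = 0 := Finset.sum_eq_zero fun n _ => hz n
        _ ≤ _ := l1Norm_nonneg u
    obtain ⟨i₀, hi₀⟩ := exists_argmax hu hr
    set w := Function.update u i₀ 0 with hwdef
    have hwsum : Summable fun i => |w i| := summable_update hu i₀
    have hlast : ∑ n ∈ Finset.range (N + 1), rearr u (1 + n)
        = (∑ n ∈ Finset.range N, rearr u (1 + (n + 1))) + rearr u (1 + 0) :=
      Finset.sum_range_succ' _ _
    have hshift : ∀ n : ℕ, rearr u (1 + (n + 1)) ≤ rearr w (1 + n) := by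
      intro n
      have := rearr_le_of_agree (u := u) hwsum (S := {i₀}) (Set.finite_singleton i₀)
        (fun i hi => Function.update_of_ne (by simpa using hi) 0 u)
        (n := 1 + n) (m := 1) (by omega) (by simp)
      rwa [show 1 + n + 1 = 1 + (n + 1) by omega] at this
    have hIH : ∑ n ∈ Finset.range N, rearr w (1 + n) ≤ l1Norm w := ih w hwsum
    have hupd : l1Norm w = l1Norm u - |u i₀| := l1Norm_update hu i₀
    have : ∑ n ∈ Finset.range N, rearr u (1 + (n + 1))
        ≤ ∑ n ∈ Finset.range N, rearr w (1 + n) :=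
      Finset.sum_le_sum fun n _ => hshift n
    rw [hlast]
    simp only [Nat.add_zero]
    have h1 : rearr u 1 ≤ |u i₀| := hi₀
    linarith

lemma summable_rearr_tail {u : ℕ → ℝ} (hu : Summable fun i => |u i|) {k : ℕ} (hk : 1 ≤ k) :
    Summable fun n => rearr u (k + n) := by
  refine summable_of_sum_range_le (c := l1Norm u) (fun n => rearr_nonneg u _) fun N => ?_
  calc ∑ n ∈ Finset.range N, rearr u (k + n)
      ≤ ∑ n ∈ Finset.range N, rearr u (1 + n) :=
        Finset.sum_le_sum fun n _ => rearr_anti hu (by omega) (by omega)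
    _ ≤ l1Norm u := sum_rearr_le_l1Norm N u hu

lemma tailSum_nonneg (u : ℕ → ℝ) (k : ℕ) : 0 ≤ tailSum u k :=
  tsum_nonneg fun _ => rearr_nonneg u _

end TP

namespace TP

lemma summable_of_finSupp {x : ℕ → ℝ} (hx : FinSupp x) : Summable fun i => |x i| := by
  refine summable_of_ne_finset_zero (s := hx.toFinset) fun i hi => ?_
  rw [Set.Finite.mem_toFinset hx] at hi
  simp only [Set.mem_setOf_eq, not_not] at hi
  rw [hi, abs_zero]

lemma summable_abs_sub {x y : ℕ → ℝ} (hx : Summable fun i => |x i|)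
    (hy : Summable fun i => |y i|) : Summable fun i => |x i - y i| :=
  Summable.of_nonneg_of_le (fun _ => abs_nonneg _) (fun i => abs_sub _ _) (hx.add hy)

/-- Direction A: removing `< k` coordinates bounds the tail sum. -/
lemma tailSum_le_l1Norm_sub {a a₀ : ℕ → ℝ} (ha : Summable fun i => |a i|)
    (ha₀ : FinSupp a₀) {k : ℕ} (hk : 1 ≤ k) (hcard : suppCard a₀ < k) :
    tailSum a k ≤ l1Norm (a - a₀) := by
  set v : ℕ → ℝ := fun i => if a₀ i = 0 then a i else 0 with hvdef
  have hvabs : ∀ i, |v i| ≤ |a i| := by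
    intro i; rw [hvdef]; by_cases h : a₀ i = 0 <;> simp [h, abs_nonneg]
  have hvsum : Summable fun i => |v i| :=
    Summable.of_nonneg_of_le (fun _ => abs_nonneg _) hvabs ha
  have hterm : ∀ n : ℕ, rearr a (k + n) ≤ rearr v (1 + n) := by
    intro n
    have := rearr_le_of_agree (u := a) hvsum (S := {i | a₀ i ≠ 0}) ha₀
      (fun i hi => by rw [hvdef]; simp only [Set.mem_setOf_eq, not_not] at hi; simp [hi])
      (n := 1 + n) (m := k - 1) (by omega) (by unfold suppCard at hcard; omega)
    rwa [show 1 + n + (k - 1) = k + n by omega] at this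
  have h1 : tailSum a k ≤ ∑' n, rearr v (1 + n) := by
    refine Summable.tsum_le_tsum hterm (summable_rearr_tail ha hk) (summable_rearr_tail hvsum le_rfl)
  have h2 : (∑' n, rearr v (1 + n)) ≤ l1Norm v := by
    refine Summable.tsum_le_of_sum_range_le (summable_rearr_tail hvsum le_rfl) fun N => ?_
    exact sum_rearr_le_l1Norm N v hvsum
  have h3 : l1Norm v ≤ l1Norm (a - a₀) := by
    refine Summable.tsum_le_tsum (fun i => ?_) hvsum (summable_abs_sub ha (summable_of_finSupp ha₀))
    rw [hvdef]
    by_cases h : a₀ i = 0 <;> simp [h, Pi.sub_apply, abs_nonneg]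
  linarith

/-- Direction B: near-optimal finite-rank approximation realizing the tail sum. -/
lemma exists_decomp {b : ℕ → ℝ} (hb : Summable fun i => |b i|) :
    ∀ s : ℕ, ∃ b₀ : ℕ → ℝ, FinSupp b₀ ∧ suppCard b₀ ≤ s ∧
      l1Norm (b - b₀) ≤ tailSum b (s + 1) := by
  -- we prove it by induction on s, generalizing b
  suffices h : ∀ s : ℕ, ∀ b : ℕ → ℝ, (Summable fun i => |b i|) →
      ∃ b₀ : ℕ → ℝ, FinSupp b₀ ∧ suppCard b₀ ≤ s ∧
        l1Norm (b - b₀) ≤ tailSum b (s + 1) from fun s => h s b hb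
  intro s
  induction s with
  | zero =>
    intro b hb
    refine ⟨0, by simp [FinSupp], by simp [suppCard], ?_⟩
    have : l1Norm (b - 0) = l1Norm b := by norm_num
    rw [this]
    refine Summable.tsum_le_of_sum_le hb fun F => ?_
    calc ∑ i ∈ F, |b i| ≤ ∑ n ∈ Finset.range F.card, rearr b (1 + n) :=
          sum_abs_le_sum_rearr F.card b hb F le_rfl
      _ ≤ ∑' n, rearr b (1 + n) :=
          Summable.sum_le_tsum _ (fun n _ => rearr_nonneg b _) (summable_rearr_tail hb le_rfl)
      _ = tailSum b (0 + 1) := by rw [tailSum]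
  | succ s ih =>
    intro b hb
    rcases (rearr_nonneg b 1).eq_or_lt with hr | hr
    · -- b = 0
      have hz : ∀ i, b i = 0 := fun i =>
        abs_eq_zero.mp (le_antisymm (le_of_le_of_eq (le_rearr_one hb i) hr.symm) (abs_nonneg _))
      refine ⟨0, by simp [FinSupp], by simp [suppCard], ?_⟩
      have h0 : l1Norm (b - 0) = 0 := by
        have : ∀ i, |(b - 0) i| = 0 := fun i => by simp [hz i]
        unfold l1Norm
        rw [tsum_congr this, tsum_zero]
      rw [h0]; exact tailSum_nonneg b _
    obtain ⟨i₀, hi₀⟩ := exists_argmax hb hr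
    have hmax : ∀ j, |b j| ≤ |b i₀| := fun j => (le_rearr_one hb j).trans hi₀
    set w := Function.update b i₀ 0 with hwdef
    have hwsum : Summable fun i => |w i| := summable_update hb i₀
    obtain ⟨w₀, hw₀fin, hw₀card, hw₀⟩ := ih w hwsum
    refine ⟨w₀ + (b - w), ?_, ?_, ?_⟩
    · refine (hw₀fin.union (Set.finite_singleton i₀)).subset fun i hi => ?_
      simp only [Set.mem_setOf_eq, Pi.add_apply, Pi.sub_apply] at hi
      by_cases h : i = i₀
      · exact Set.mem_union_right _ (by simp [h])
      · refine Set.mem_union_left _ ?_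
        have hwi : w i = b i := Function.update_of_ne h 0 b
        simp only [Set.mem_setOf_eq]
        intro hzero; rw [hzero, hwi] at hi; simp at hi
    · calc suppCard (w₀ + (b - w))
          ≤ ({i | w₀ i ≠ 0} ∪ {i₀}).ncard := by
            refine Set.ncard_le_ncard (fun i hi => ?_) (hw₀fin.union (Set.finite_singleton i₀))
            simp only [Set.mem_setOf_eq, Pi.add_apply, Pi.sub_apply] at hi
            by_cases h : i = i₀
            · exact Set.mem_union_right _ (by simp [h])
            · refine Set.mem_union_left _ ?_
              have hwi : w i = b i := Function.update_of_ne h 0 b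
              simp only [Set.mem_setOf_eq]
              intro hzero; rw [hzero, hwi] at hi; simp at hi
        _ ≤ {i | w₀ i ≠ 0}.ncard + ({i₀} : Set ℕ).ncard := Set.ncard_union_le _ _
        _ ≤ s + 1 := by
            have := Set.ncard_singleton i₀
            unfold suppCard at hw₀card
            omega
    · have heq : b - (w₀ + (b - w)) = w - w₀ := by funext i; simp; ring
      rw [heq]
      refine hw₀.trans ?_
      -- tailSum w (s+1) ≤ tailSum b (s+1+1)
      refine Summable.tsum_le_tsum (fun n => ?_) (summable_rearr_tail hwsum (by omega))
        (summable_rearr_tail hb (by omega))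
      have := rearr_update_le hb hmax (n := s + 1 + n) (by omega)
      rwa [show s + 1 + n + 1 = s + 1 + 1 + n by omega] at this

end TP

namespace TP

lemma nonneg_of_L1BddBy {T : (ℕ → ℝ) → ℕ → ℝ} {M : ℝ} (h1 : L1BddBy T M) : 0 ≤ M := by
  set e : ℕ → ℝ := fun i => if i = 0 then 1 else 0 with he
  have hesum : MemL1 e := by
    refine summable_of_ne_finset_zero (s := {0}) fun i hi => ?_
    simp only [Finset.mem_singleton] at hi
    simp [he, hi]
  have hnorm : l1Norm e = 1 := by
    unfold l1Norm
    have : ∀ i, |e i| = if i = 0 then (1 : ℝ) else 0 := fun i => by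
      by_cases h : i = 0 <;> simp [he, h]
    rw [tsum_congr this, tsum_ite_eq]
  have := (h1 e hesum).2
  rw [hnorm, mul_one] at this
  exact le_trans (l1Norm_nonneg _) this

lemma core {T : (ℕ → ℝ) → ℕ → ℝ} {M : ℝ} {a b : ℕ → ℝ} (hT : IsHom T)
    (h1 : L1BddBy T M) (h0 : L0BddBy T M) (hTb : T b = a) (hb : MemL1 b)
    {k s : ℕ} (hk : 1 ≤ k) (hMs : M * s < k) :
    tailSum a k ≤ M * tailSum b (s + 1) := by
  have hM0 : 0 ≤ M := nonneg_of_L1BddBy h1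
  obtain ⟨b₀, hb₀fin, hb₀card, hb₀⟩ := exists_decomp hb s
  set b₁ := b - b₀ with hb₁def
  have hb₀sum : Summable fun i => |b₀ i| := summable_of_finSupp hb₀fin
  have hb₁sum : MemL1 b₁ := summable_abs_sub hb hb₀sum
  have hbeq : b = b₀ + b₁ := by funext i; simp [hb₁def]
  have ha : a = T b₀ + T b₁ := by rw [← hTb, hbeq, hT.1]
  have hTb₀ := h0 b₀ hb₀fin
  have hTb₁ := h1 b₁ hb₁sum
  have hacard : suppCard (T b₀) < k := by
    have h2 : (suppCard (T b₀) : ℝ) ≤ M * s := by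
      refine hTb₀.2.trans ?_
      exact mul_le_mul_of_nonneg_left (by exact_mod_cast hb₀card) hM0
    have : (suppCard (T b₀) : ℝ) < (k : ℝ) := lt_of_le_of_lt h2 hMs
    exact_mod_cast this
  have hasum : Summable fun i => |a i| := by rw [← hTb]; exact (h1 b hb).1
  have hsub : a - T b₀ = T b₁ := by rw [ha]; funext i; simp
  calc tailSum a k ≤ l1Norm (a - T b₀) :=
        tailSum_le_l1Norm_sub hasum hTb₀.1 hk hacard
    _ = l1Norm (T b₁) := by rw [hsub]
    _ ≤ M * l1Norm b₁ := hTb₁.2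
    _ ≤ M * tailSum b (s + 1) := mul_le_mul_of_nonneg_left hb₀ hM0

end TP


/-- Proposition 1: if `b ∈ ℓ¹`, `a ∈ Orb(b; ℓ⁰, ℓ¹)` and
`C := ‖a‖_{Orb(b;ℓ⁰,ℓ¹)} > 0`, then `∑_{i=k}^∞ a_i^* ≤ C·∑_{i=max(⌊k/C⌋,1)}^∞ b_i^*`
for all `k ≥ 1`. -/
theorem tail_estimate_of_mem_orbit (a b : ℕ → ℝ) (hb : MemL1 b) (hab : InOrbit b a)
    (hC : 0 < orbNorm b a) :
    ∀ k : ℕ, 1 ≤ k →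
      tailSum a k ≤ orbNorm b a * tailSum b (max ⌊(k : ℝ) / orbNorm b a⌋₊ 1) := by
  intro k hk
  set C := orbNorm b a with hCdef
  set OS : Set ℝ := {M : ℝ | ∃ T, IsHom T ∧ L1BddBy T M ∧ L0BddBy T M ∧ T b = a} with hOS
  have hOSne : OS.Nonempty := by
    obtain ⟨T, M, h1, h2, h3, h4⟩ := hab
    exact ⟨M, T, h1, h2, h3, h4⟩
  have hOSbdd : BddBelow OS := by
    refine ⟨0, fun M hM => ?_⟩
    obtain ⟨T, _, h2, _, _⟩ := hM
    exact TP.nonneg_of_L1BddBy h2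
  set j := max ⌊(k : ℝ) / C⌋₊ 1 with hjdef
  have hj1 : 1 ≤ j := le_max_right _ _
  set s := j - 1 with hsdef
  have hsj : s + 1 = j := by omega
  have hkpos : (0 : ℝ) < k := by exact_mod_cast hk
  have hsdiv : (s : ℝ) < k / C := by
    rcases le_or_gt ⌊(k : ℝ) / C⌋₊ 1 with h | h
    · have : j = 1 := by rw [hjdef]; omega
      rw [hsdef, this]
      simpa using div_pos hkpos hC
    · have hjf : j = ⌊(k : ℝ) / C⌋₊ := by rw [hjdef]; omega
      have hcast : (s : ℝ) = (⌊(k : ℝ) / C⌋₊ : ℝ) - 1 := by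
        rw [hsdef, hjf]
        have : 1 ≤ ⌊(k : ℝ) / C⌋₊ := by omega
        push_cast [Nat.cast_sub this]
        ring
      have hfl : (⌊(k : ℝ) / C⌋₊ : ℝ) ≤ k / C :=
        Nat.floor_le (div_nonneg hkpos.le hC.le)
      rw [hcast]; linarith
  have hCs : C * (s : ℝ) < k := by
    have := (lt_div_iff₀ hC).mp hsdiv
    linarith [this]
  rw [← hsj]
  set D := tailSum b (s + 1) with hDdef
  have hD0 : 0 ≤ D := TP.tailSum_nonneg b _
  refine le_of_forall_pos_le_add fun ε hε => ?_
  set η := min (ε / (D + 1)) ((k - C * s) / (s + 1)) with hηdef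
  have hη0 : 0 < η := by
    refine lt_min (div_pos hε (by linarith)) (div_pos (by linarith) ?_)
    positivity
  have hinf : sInf OS < C + η := by
    have : sInf OS = C := rfl
    rw [this]; linarith
  obtain ⟨M, hMmem, hMlt⟩ := (csInf_lt_iff hOSbdd hOSne).mp hinf
  obtain ⟨T, hThom, hT1, hT0, hTba⟩ := hMmem
  have hηs1 : η * ((s : ℝ) + 1) ≤ k - C * s := by
    have h2 : η ≤ (k - C * s) / (s + 1) := min_le_right _ _
    have h3 : (0:ℝ) < (s:ℝ) + 1 := by positivity
    calc η * ((s : ℝ) + 1) ≤ ((k - C * s) / (s + 1)) * ((s : ℝ) + 1) :=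
          mul_le_mul_of_nonneg_right h2 h3.le
      _ = k - C * s := by field_simp
  have hMs : M * s < k := by nlinarith [Nat.cast_nonneg (α := ℝ) s]
  have hcore : tailSum a k ≤ M * D := TP.core hThom hT1 hT0 hTba hb hk hMs
  have hηD : η * D ≤ ε := by
    have h2 : η ≤ ε / (D + 1) := min_le_left _ _
    have h3 : (0:ℝ) < D + 1 := by linarith
    calc η * D ≤ (ε / (D + 1)) * D := mul_le_mul_of_nonneg_right h2 hD0
      _ ≤ (ε / (D + 1)) * (D + 1) := by
          refine mul_le_mul_of_nonneg_left (by linarith) (div_pos hε h3).le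
      _ = ε := by field_simp
  have hMD : M * D ≤ (C + η) * D := mul_le_mul_of_nonneg_right hMlt.le hD0
  calc tailSum a k ≤ M * D := hcore
    _ ≤ (C + η) * D := hMD
    _ = C * D + η * D := by ring
    _ ≤ C * D + ε := by linarith
end

section
/- For every x = (x_i)_{i≥1} ∈ l_1 and every t ≥ 0, the approximative E-functional of x in the pair (l_0, l_1) satisfies E(t, x; l_0, l_1) = ∑_{i=⌊t⌋+1}^∞ x_i^*; that is, inf{‖x − x₀‖₁ : x₀ finitely supported, card(supp x₀) ≤ t} equals the tail sum of the nonincreasing rearrangement of x starting at index ⌊t⌋+1. -/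
open scoped BigOperators ENNReal

/-- Level sets of a summable nonneg sequence are finite. -/
lemma level_finite {a : ℕ → ℝ} (ha : Summable a) {c : ℝ} (hc : 0 < c) :
    {i : ℕ | c ≤ a i}.Finite := by
  have h := ha.tendsto_cofinite_zero
  have h2 : ∀ᶠ i in Filter.cofinite, a i ∈ Set.Iio c :=
    h (Iio_mem_nhds (by simpa using hc))
  rw [Filter.eventually_cofinite] at h2
  exact h2.subset fun i hi => by simp only [Set.mem_setOf_eq, Set.mem_Iio] at *; linarith

lemma exists_max_off {a : ℕ → ℝ} (ha : Summable a) (h0 : ∀ i, 0 ≤ a i) (s : Finset ℕ) :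
    ∃ i, i ∉ s ∧ ∀ j, j ∉ s → a j ≤ a i := by
  by_cases hpos : ∃ j₀, j₀ ∉ s ∧ 0 < a j₀
  · obtain ⟨j₀, hj₀s, hj₀⟩ := hpos
    classical
    set F : Finset ℕ := (level_finite ha hj₀).toFinset \ s with hF
    have hj₀F : j₀ ∈ F := by
      simp [hF, Set.Finite.mem_toFinset, hj₀s]
    obtain ⟨i, hiF, hmax⟩ := F.exists_max_image a ⟨j₀, hj₀F⟩
    have hiS : i ∉ s := (Finset.mem_sdiff.mp hiF).2
    refine ⟨i, hiS, fun j hj => ?_⟩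
    by_cases hjl : a j₀ ≤ a j
    · exact hmax j (by simp [hF, Set.Finite.mem_toFinset, hjl, hj])
    · have := hmax j₀ hj₀F
      push_neg at hjl
      linarith
  · push_neg at hpos
    obtain ⟨i, hi⟩ := Infinite.exists_notMem_finset s
    exact ⟨i, hi, fun j hj => le_trans (hpos j hj) (h0 i)⟩

/-- A decreasing enumeration covering the support. -/
lemma exists_enum {a : ℕ → ℝ} (ha : Summable a) (h0 : ∀ i, 0 ≤ a i) :
    ∃ e : ℕ → ℕ, Function.Injective e ∧ Antitone (fun n => a (e n)) ∧
      ∀ i, a i ≠ 0 → i ∈ Set.range e := by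
  classical
  have pick : ∀ s : Finset ℕ, ∃ i, i ∉ s ∧ ∀ j, j ∉ s → a j ≤ a i := exists_max_off ha h0
  let S : ℕ → Finset ℕ := fun n => Nat.rec ∅ (fun _ s => insert (pick s).choose s) n
  let e : ℕ → ℕ := fun n => (pick (S n)).choose
  have hS_succ : ∀ n, S (n + 1) = insert (e n) (S n) := fun n => rfl
  have he_notmem : ∀ n, e n ∉ S n := fun n => (pick (S n)).choose_spec.1
  have he_max : ∀ n, ∀ j, j ∉ S n → a j ≤ a (e n) := fun n => (pick (S n)).choose_spec.2
  have hS_mono : ∀ m n, m ≤ n → S m ⊆ S n := by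
    intro m n hmn
    induction n with
    | zero => simpa [Nat.le_zero.mp hmn] using Finset.Subset.refl _
    | succ k ih =>
      rcases Nat.lt_or_ge m (k+1) with h | h
      · exact (ih (Nat.lt_succ_iff.mp h)).trans (by rw [hS_succ]; exact Finset.subset_insert _ _)
      · have : m = k + 1 := le_antisymm hmn h
        subst this; exact Finset.Subset.refl _
  have he_memS : ∀ m n, m < n → e m ∈ S n := by
    intro m n hmn
    have : e m ∈ S (m+1) := by rw [hS_succ]; exact Finset.mem_insert_self _ _
    exact hS_mono (m+1) n hmn this
  have einj : Function.Injective e := by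
    intro m n hmn
    by_contra hne
    rcases Nat.lt_or_ge m n with h | h
    · exact he_notmem n (hmn ▸ he_memS m n h)
    · exact he_notmem m (hmn ▸ he_memS n m (lt_of_le_of_ne h (Ne.symm hne)))
  refine ⟨e, einj, ?_, ?_⟩
  · apply antitone_nat_of_succ_le
    intro n
    apply he_max n
    intro h
    exact he_notmem (n+1) (by rw [hS_succ]; exact Finset.mem_insert_of_mem h)
  · intro i hi
    by_contra hir
    have hpos : 0 < a i := lt_of_le_of_ne (h0 i) (Ne.symm hi)
    have hiS : ∀ n, i ∉ S n := by
      intro n hn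
      -- S n consists of values of e
      have : ∀ k, ∀ j ∈ S k, j ∈ Set.range e := by
        intro k
        induction k with
        | zero => intro j hj; simp [S] at hj
        | succ l ih =>
          intro j hj
          rw [hS_succ] at hj
          rcases Finset.mem_insert.mp hj with h | h
          · exact ⟨l, h.symm⟩
          · exact ih j h
      exact hir (this n i hn)
    have hge : ∀ n, a i ≤ a (e n) := fun n => he_max n i (hiS n)
    have : Set.range e ⊆ {j | a i ≤ a j} := by
      rintro _ ⟨n, rfl⟩; exact hge n
    have hfin : (Set.range e).Finite := (level_finite ha hpos).subset this
    exact Set.infinite_range_of_injective einj hfin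

/-- Sum over any finset of card ≤ m of an antitone nonneg sequence is at most
the sum over `range m`. -/
lemma sum_le_sum_range {b : ℕ → ℝ} (hb : Antitone b) (h0 : ∀ n, 0 ≤ b n) :
    ∀ m (J : Finset ℕ), J.card ≤ m → ∑ j ∈ J, b j ≤ ∑ j ∈ Finset.range m, b j := by
  intro m
  induction m with
  | zero => intro J hJ; simp [Finset.card_eq_zero.mp (Nat.le_zero.mp hJ)]
  | succ m ih =>
    intro J hJ
    by_cases hsub : J ⊆ Finset.range (m+1)
    · exact Finset.sum_le_sum_of_subset_of_nonneg hsub (fun i _ _ => h0 i)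
    · have hne : J.Nonempty := by
        rcases Finset.eq_empty_or_nonempty J with rfl | h
        · simp at hsub
        · exact h
      set M := J.max' hne with hM
      have hMJ : M ∈ J := J.max'_mem hne
      have hMge : m ≤ M := by
        by_contra hlt
        push_neg at hlt
        apply hsub
        intro j hj
        have := J.le_max' j hj
        exact Finset.mem_range.mpr (by omega)
      have hcard : (J.erase M).card ≤ m := by
        have := Finset.card_erase_of_mem hMJ
        omega
      calc ∑ j ∈ J, b j = b M + ∑ j ∈ J.erase M, b j := by
            rw [Finset.add_sum_erase _ _ hMJ]
        _ ≤ b m + ∑ j ∈ Finset.range m, b j := add_le_add (hb hMge) (ih _ hcard)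
        _ = ∑ j ∈ Finset.range (m+1), b j := by rw [Finset.sum_range_succ]; ring

lemma ncard_Iio (j : ℕ) : (Set.Iio j).ncard = j := by
  rw [← Finset.coe_range, Set.ncard_coe_finset, Finset.card_range]

lemma rearr_eq {x : ℕ → ℝ} {e : ℕ → ℕ} (einj : Function.Injective e)
    (hanti : Antitone fun n => |x (e n)|) (hcov : ∀ i, |x i| ≠ 0 → i ∈ Set.range e)
    (j : ℕ) : rearr x (j + 1) = |x (e j)| := by
  apply IsLeast.csInf_eq
  constructor
  · refine ⟨abs_nonneg _, ?_⟩
    have hsub : {i : ℕ | |x (e j)| < |x i|} ⊆ e '' Set.Iio j := by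
      intro i hi
      simp only [Set.mem_setOf_eq] at hi
      have hne : |x i| ≠ 0 := ne_of_gt (lt_of_le_of_lt (abs_nonneg _) hi)
      obtain ⟨n, rfl⟩ := hcov i hne
      have hnj : n < j := by
        by_contra h
        push_neg at h
        exact absurd (hanti h) (not_le.mpr hi)
      exact ⟨n, hnj, rfl⟩
    have hfinIm : (e '' Set.Iio j).Finite := (Set.finite_Iio j).image e
    refine ⟨hfinIm.subset hsub, ?_⟩
    have h1 : {i : ℕ | |x (e j)| < |x i|}.ncard ≤ (e '' Set.Iio j).ncard :=
      Set.ncard_le_ncard hsub hfinIm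
    rw [Set.ncard_image_of_injective _ einj, ncard_Iio] at h1
    omega
  · rintro s ⟨hs0, hfin, hcard⟩
    by_contra h
    push_neg at h
    have hsub : e '' Set.Iio (j+1) ⊆ {i : ℕ | s < |x i|} := by
      rintro _ ⟨n, hn, rfl⟩
      exact lt_of_lt_of_le h (hanti (Nat.lt_succ_iff.mp hn))
    have h1 : (e '' Set.Iio (j+1)).ncard ≤ {i : ℕ | s < |x i|}.ncard :=
      Set.ncard_le_ncard hsub hfin
    rw [Set.ncard_image_of_injective _ einj, ncard_Iio] at h1
    omega

/-- for `x ∈ ℓ¹` and `t ≥ 0`,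
`E(t, x; ℓ⁰, ℓ¹) = ∑_{i=⌊t⌋+1}^∞ x_i^*`. -/
theorem Efun_eq_tailSum (x : ℕ → ℝ) (hx : MemL1 x) (t : ℝ) (ht : 0 ≤ t) :
    Efun t x = tailSum x (⌊t⌋₊ + 1) := by
  classical
  set a : ℕ → ℝ := fun i => |x i| with ha_def
  have ha : Summable a := hx
  have h0 : ∀ i, 0 ≤ a i := fun i => abs_nonneg _
  obtain ⟨e, einj, hanti, hcov⟩ := exists_enum ha h0
  set b : ℕ → ℝ := fun n => a (e n) with hb_def
  have hb0 : ∀ n, 0 ≤ b n := fun n => h0 _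
  have hbsum : Summable b := ha.comp_injective einj
  have htsum_b : ∑' n, b n = ∑' i, a i :=
    einj.tsum_eq (f := a) (fun i hi => hcov i hi)
  have hre : ∀ j : ℕ, rearr x (j + 1) = b j := fun j => rearr_eq einj hanti hcov j
  set m := ⌊t⌋₊ with hm
  have htail : tailSum x (m + 1) = ∑' n, b (n + m) := by
    unfold tailSum
    apply tsum_congr
    intro n
    have : m + 1 + n = (n + m) + 1 := by ring
    rw [this, hre]
  have hsum_split : ∑ j ∈ Finset.range m, b j + ∑' n, b (n + m) = ∑' n, b n :=
    Summable.sum_add_tsum_nat_add m hbsum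
  unfold Efun
  apply le_antisymm
  · set S : Set ℕ := e '' Set.Iio m with hS
    have hSfin : S.Finite := (Set.finite_Iio m).image e
    set F : Finset ℕ := (Finset.range m).image e with hF
    have hSF : S = ↑F := by
      rw [hS, hF, Finset.coe_image, Finset.coe_range]
    set x₀ : ℕ → ℝ := S.indicator x with hx₀
    apply csInf_le
    · refine ⟨0, fun r hr => ?_⟩
      obtain ⟨y, _, _, rfl⟩ := hr
      exact tsum_nonneg (fun i => abs_nonneg _)
    · have hsupp : {i : ℕ | x₀ i ≠ 0} ⊆ S := fun i hi =>
        Set.support_indicator_subset hi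
      refine ⟨x₀, hSfin.subset hsupp, ?_, ?_⟩
      · have h1 : suppCard x₀ ≤ m := by
          unfold suppCard
          have := Set.ncard_le_ncard hsupp hSfin
          rw [hS, Set.ncard_image_of_injective _ einj] at this
          rw [← Finset.coe_range, Set.ncard_coe_finset, Finset.card_range] at this
          exact this
        calc (suppCard x₀ : ℝ) ≤ (m : ℝ) := by exact_mod_cast h1
          _ ≤ t := Nat.floor_le ht
      · have hxx : ∀ i, |(x - x₀) i| = (Sᶜ).indicator a i := by
          intro i
          by_cases hi : i ∈ S
          · rw [Set.indicator_of_notMem (by simpa using hi)]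
            simp [hx₀, Set.indicator_of_mem hi]
          · rw [Set.indicator_of_mem (by simpa using hi)]
            simp [hx₀, Set.indicator_of_notMem hi, ha_def]
        have hL : l1Norm (x - x₀) = ∑' i, (Sᶜ).indicator a i := tsum_congr hxx
        have hsplit2 : ∑' i, S.indicator a i + ∑' i, (Sᶜ).indicator a i = ∑' i, a i := by
          rw [← Summable.tsum_add (ha.indicator S) (ha.indicator Sᶜ)]
          apply tsum_congr
          intro i
          exact congrFun (Set.indicator_self_add_compl S a) i
        have hSsum : ∑' i, S.indicator a i = ∑ j ∈ Finset.range m, b j := by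
          rw [tsum_eq_sum (s := F)
            (fun i hiF => Set.indicator_of_notMem (by rw [hSF]; exact_mod_cast hiF) a)]
          rw [hF, Finset.sum_image (fun i _ j _ h => einj h)]
          apply Finset.sum_congr rfl
          intro j hj
          exact Set.indicator_of_mem (by rw [hSF, hF]; exact_mod_cast Finset.mem_image_of_mem e hj) a
        rw [htail, hL]
        linarith [hsplit2, hSsum, hsum_split, htsum_b]
  · apply le_csInf
    · refine ⟨l1Norm x, 0, ?_, ?_, ?_⟩
      · simp [FinSupp]
      · simp only [suppCard]
        simp only [Pi.zero_apply, ne_eq, not_not, Set.setOf_false,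
          Set.ncard_empty, Nat.cast_zero]
        · simpa using ht
      · simp
    · rintro r ⟨x₀, hfin, hcard, rfl⟩
      have hcm : suppCard x₀ ≤ m := Nat.le_floor hcard
      set F₀ : Finset ℕ := hfin.toFinset with hF₀
      have hmemF₀ : ∀ i, i ∈ F₀ ↔ x₀ i ≠ 0 := fun i => Set.Finite.mem_toFinset hfin
      have hcardF : F₀.card = suppCard x₀ := by
        rw [suppCard, Set.ncard_eq_toFinset_card _ hfin]
      -- Step A
      set g : ℕ → ℕ := fun i => if h : ∃ n, e n = i then h.choose else 0 with hg_def
      have hg : ∀ i, a i ≠ 0 → e (g i) = i := by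
        intro i hi
        obtain ⟨n, hn⟩ := hcov i hi
        have hex : ∃ n, e n = i := ⟨n, hn⟩
        simp only [hg_def, dif_pos hex]
        exact hex.choose_spec
      set F₀' : Finset ℕ := F₀.filter (fun i => a i ≠ 0) with hF₀'
      have hsum_filter : ∑ i ∈ F₀', a i = ∑ i ∈ F₀, a i := Finset.sum_filter_ne_zero F₀
      set J : Finset ℕ := F₀'.image g with hJ
      have hamem : ∀ i ∈ F₀', a i ≠ 0 := fun i hi => (Finset.mem_filter.mp hi).2
      have hJsum : ∑ j ∈ J, b j = ∑ i ∈ F₀', a i := by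
        rw [hJ, Finset.sum_image (fun i hi j hj h => by
          rw [← hg i (hamem i hi), ← hg j (hamem j hj), h])]
        apply Finset.sum_congr rfl
        intro i hi
        simp only [hb_def]
        rw [hg i (hamem i hi)]
      have hJcard : J.card ≤ m :=
        le_trans Finset.card_image_le (le_trans (Finset.card_filter_le _ _) (hcardF ▸ hcm))
      have hA : ∑ i ∈ F₀, a i ≤ ∑ j ∈ Finset.range m, b j := by
        rw [← hsum_filter, ← hJsum]
        exact sum_le_sum_range hanti hb0 m J hJcard
      -- Step B
      have hx₀sum : Summable fun i => |x₀ i| := by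
        apply summable_of_ne_finset_zero (s := F₀)
        intro i hi
        have : x₀ i = 0 := by
          by_contra h
          exact hi ((hmemF₀ i).mpr h)
        simp [this]
      have hxsum : Summable fun i => |(x - x₀) i| := by
        apply Summable.of_nonneg_of_le (fun i => abs_nonneg _) (fun i => ?_) (ha.add hx₀sum)
        simp only [Pi.sub_apply, Pi.add_apply]
        calc |x i - x₀ i| ≤ |x i| + |x₀ i| := abs_sub _ _
          _ = a i + |x₀ i| := rfl
      set C : Set ℕ := (↑F₀ : Set ℕ)ᶜ with hC
      have hd_le : ∀ i, C.indicator a i ≤ |(x - x₀) i| := by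
        intro i
        by_cases hi : i ∈ C
        · rw [Set.indicator_of_mem hi]
          have hx0 : x₀ i = 0 := by
            by_contra h
            exact hi (by simpa [hC] using (hmemF₀ i).mpr h)
          simp [hx0, ha_def]
        · rw [Set.indicator_of_notMem hi]
          exact abs_nonneg _
      have hB : ∑' i, C.indicator a i ≤ l1Norm (x - x₀) :=
        Summable.tsum_le_tsum hd_le (ha.indicator _) hxsum
      have hsplit3 : ∑ i ∈ F₀, a i + ∑' i, C.indicator a i = ∑' i, a i := by
        have h := Summable.sum_add_tsum_compl (s := F₀) ha
        rwa [tsum_subtype] at h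
      have hfinal : tailSum x (m + 1) ≤ ∑' i, C.indicator a i := by
        rw [htail]
        linarith [hA, hsplit3, hsum_split, htsum_b]
      linarith [hB, hfinal]
end
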